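/- arXiv:2505.13022 — 9 statements merged into one kernel-verified Lean document; each statement's English description precedes it below -/
import Mathlib

section
/- In the matching-pennies environment with K₁ = 2 and K₂ = 3, there is no clustered analogy-based expectation equilibrium: there is no pair (An₁, (σ₁, σ₂)) such that An₁ is a partition of {a,b,c} into two nonempty classes, (σ₁, σ₂) is an ABEE given An₁, and An₁ is locally clustered with respect to σ₂. (In particular there is also no globally clustered ABEE.) -/
set_option linter.unusedVariables false

lemma aux_mp (x y β t : ℝ) (hx : 0 < x) (hy : 0 < y) (hy2 : y < 2) (hxy : x ≠ y)
    (hβ : β * (2 + y) = 1) (ht : t * (2 + x) = 1)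
    (h1 : β ^ 2 ≤ t ^ 2) (h2 : β ^ 2 ≤ (2 * β - t) ^ 2) : False := by
  have hβpos : 0 < β := by nlinarith
  have htpos : 0 < t := by nlinarith
  have hβ4 : 1 / 4 < β := by nlinarith
  have ht2 : t < 1 / 2 := by nlinarith
  have hle : β ≤ t := by nlinarith
  have hne : β ≠ t := by
    intro h
    subst h
    have h' : β * (2 + y) = β * (2 + x) := by rw [hβ, ht]
    have := mul_left_cancel₀ (ne_of_gt hβpos) h'
    exact hxy (by linarith)
  have hlt : β < t := lt_of_le_of_ne hle hne
  nlinarith [mul_pos (show (0:ℝ) < 3 * β - t by linarith) (show (0:ℝ) < t - β by linarith)]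

lemma aux_halflt (x t : ℝ) (hx : 0 < x) (ht0 : 0 ≤ t) (h : (1 + x) * t ≤ 1 - t) :
    t < 1 / 2 := by nlinarith

lemma aux_big (x β : ℝ) (hx : 0 < x) (hβ : 1 / 2 ≤ β) (h : (1 + x) * β ≤ 1 - β) :
    False := by nlinarith

lemma aux_pos (s β : ℝ) (hs : 0 < s) (h : β * s = 1) : 0 < β := by nlinarith

/-- **No clustered ABEE in the matching-pennies environment** (Proposition 1).

Three matching-pennies games indexed by `x ∈ {a, b, c}` with `0 < a < b < c < 2`, each
played with probability `1/3`.  The column player partitions the games finely (`K₂ = 3`);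
the row player uses a two-class analogy partition `{{x₁, x₂}, {x₃}}` of `{a, b, c}`
(every partition of a three-element set into two nonempty classes has this form).
`σ₁ x` is the probability of `U`, `σ₂ x` the probability of `L` in game `x`; the row
player's analogy-based expectation in the pair class is `(σ₂ x₁ + σ₂ x₂) / 2` and in the
singleton class it is `σ₂ x₃`.  No strategy profile can simultaneously be an ABEE given
the partition and have the partition locally clustered with respect to `σ₂`. -/
theorem no_clustered_ABEE_matching_pennies
    (a b c : ℝ) (ha : 0 < a) (hab : a < b) (hbc : b < c) (hc2 : c < 2)
    (σ₁ σ₂ : ℝ → ℝ)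
    (hσ₁ : ∀ x ∈ ({a, b, c} : Set ℝ), σ₁ x ∈ Set.Icc (0 : ℝ) 1)
    (hσ₂ : ∀ x ∈ ({a, b, c} : Set ℝ), σ₂ x ∈ Set.Icc (0 : ℝ) 1)
    (x₁ x₂ x₃ : ℝ) (hset : ({x₁, x₂, x₃} : Set ℝ) = {a, b, c})
    -- row player's best response in the pair class {x₁, x₂}
    (hrow : ∀ x, (x = x₁ ∨ x = x₂) →
      (0 < σ₁ x → 1 - (σ₂ x₁ + σ₂ x₂) / 2 ≤ (1 + x) * ((σ₂ x₁ + σ₂ x₂) / 2)) ∧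
      (σ₁ x < 1 → (1 + x) * ((σ₂ x₁ + σ₂ x₂) / 2) ≤ 1 - (σ₂ x₁ + σ₂ x₂) / 2))
    -- row player's best response in the singleton class {x₃}
    (hrow₃ : (0 < σ₁ x₃ → 1 - σ₂ x₃ ≤ (1 + x₃) * σ₂ x₃) ∧
      (σ₁ x₃ < 1 → (1 + x₃) * σ₂ x₃ ≤ 1 - σ₂ x₃))
    -- column player's best responses
    (hcol : ∀ x ∈ ({a, b, c} : Set ℝ),
      (0 < σ₂ x → σ₁ x ≤ 1 - σ₁ x) ∧ (σ₂ x < 1 → 1 - σ₁ x ≤ σ₁ x))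
    -- the partition {{x₁, x₂}, {x₃}} is locally clustered with respect to σ₂
    (hclus : (∀ x, (x = x₁ ∨ x = x₂) →
        (σ₂ x - (σ₂ x₁ + σ₂ x₂) / 2) ^ 2 ≤ (σ₂ x - σ₂ x₃) ^ 2) ∧
      (σ₂ x₃ - σ₂ x₃) ^ 2 ≤ (σ₂ x₃ - (σ₂ x₁ + σ₂ x₂) / 2) ^ 2) :
    False := by
  have hx₁m : x₁ ∈ ({a, b, c} : Set ℝ) := by rw [← hset]; simp
  have hx₂m : x₂ ∈ ({a, b, c} : Set ℝ) := by rw [← hset]; simp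
  have hx₃m : x₃ ∈ ({a, b, c} : Set ℝ) := by rw [← hset]; simp
  have hbnd : ∀ x ∈ ({a, b, c} : Set ℝ), 0 < x ∧ x < 2 := by
    intro x hx
    simp only [Set.mem_insert_iff, Set.mem_singleton_iff] at hx
    rcases hx with h | h | h <;> subst h <;> constructor <;> linarith
  have haM : a = x₁ ∨ a = x₂ ∨ a = x₃ := by
    have : a ∈ ({x₁, x₂, x₃} : Set ℝ) := by rw [hset]; simp
    simpa using this
  have hbM : b = x₁ ∨ b = x₂ ∨ b = x₃ := by
    have : b ∈ ({x₁, x₂, x₃} : Set ℝ) := by rw [hset]; simp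
    simpa using this
  have hcM : c = x₁ ∨ c = x₂ ∨ c = x₃ := by
    have : c ∈ ({x₁, x₂, x₃} : Set ℝ) := by rw [hset]; simp
    simpa using this
  have h12 : x₁ ≠ x₂ := by
    intro h
    rcases haM with h1 | h1 | h1 <;> rcases hbM with h2 | h2 | h2 <;>
      rcases hcM with h3 | h3 | h3 <;> linarith
  have h13 : x₁ ≠ x₃ := by
    intro h
    rcases haM with h1 | h1 | h1 <;> rcases hbM with h2 | h2 | h2 <;>
      rcases hcM with h3 | h3 | h3 <;> linarith
  have h23 : x₂ ≠ x₃ := by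
    intro h
    rcases haM with h1 | h1 | h1 <;> rcases hbM with h2 | h2 | h2 <;>
      rcases hcM with h3 | h3 | h3 <;> linarith
  have hx₁b := hbnd x₁ hx₁m
  have hx₂b := hbnd x₂ hx₂m
  have hx₃b := hbnd x₃ hx₃m
  set β : ℝ := (σ₂ x₁ + σ₂ x₂) / 2 with hβdef
  -- singleton class analysis
  have ht01 := hσ₂ x₃ hx₃m
  have hs1x₃ := hσ₁ x₃ hx₃m
  have hcol₃ := hcol x₃ hx₃m
  have hσ₁₃lt : σ₁ x₃ < 1 := by
    by_contra h
    have h1 : σ₁ x₃ = 1 := le_antisymm hs1x₃.2 (not_lt.mp h)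
    have h2 : σ₂ x₃ ≤ 0 := by
      by_contra h2
      have := hcol₃.1 (not_le.mp h2)
      linarith
    have h3 : σ₂ x₃ = 0 := le_antisymm h2 ht01.1
    have := hrow₃.1 (by rw [h1]; norm_num)
    rw [h3] at this
    norm_num at this
  have htle : (1 + x₃) * σ₂ x₃ ≤ 1 - σ₂ x₃ := hrow₃.2 hσ₁₃lt
  have ht_lt1 : σ₂ x₃ < 1 := by
    have := aux_halflt x₃ (σ₂ x₃) hx₃b.1 ht01.1 htle
    linarith
  have hσ₁₃pos : 0 < σ₁ x₃ := by
    have := hcol₃.2 ht_lt1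
    linarith
  have htge := hrow₃.1 hσ₁₃pos
  have hq₃ : (1 + x₃) * σ₂ x₃ = 1 - σ₂ x₃ := le_antisymm htle htge
  have ht_eq : σ₂ x₃ * (2 + x₃) = 1 := by linear_combination hq₃
  -- pair class: σ₁ positive on both
  have hpairpos : ∀ x ∈ ({a, b, c} : Set ℝ), (x = x₁ ∨ x = x₂) → 0 < σ₁ x := by
    intro x hxm hx12
    by_contra h
    have h0 : σ₁ x = 0 := le_antisymm (not_lt.mp h) (hσ₁ x hxm).1
    have h2 : σ₂ x = 1 := by
      by_contra h2
      have := (hcol x hxm).2 (lt_of_le_of_ne (hσ₂ x hxm).2 h2)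
      rw [h0] at this
      linarith
    have hr := (hrow x hx12).2 (by rw [h0]; norm_num)
    have hxb := hbnd x hxm
    rcases hx12 with h' | h'
    · rw [h'] at h2 hr hxb
      exact aux_big x₁ β hxb.1 (by rw [hβdef]; linarith [(hσ₂ x₂ hx₂m).1]) hr
    · rw [h'] at h2 hr hxb
      exact aux_big x₂ β hxb.1 (by rw [hβdef]; linarith [(hσ₂ x₁ hx₁m).1]) hr
  have hp1 : 0 < σ₁ x₁ := hpairpos x₁ hx₁m (Or.inl rfl)
  have hp2 : 0 < σ₁ x₂ := hpairpos x₂ hx₂m (Or.inr rfl)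
  have hcol₁ := hcol x₁ hx₁m
  have hcol₂ := hcol x₂ hx₂m
  by_cases hA : σ₁ x₁ < 1
  · by_cases hB : σ₁ x₂ < 1
    · -- both interior: forces x₁ = x₂
      have e1a := (hrow x₁ (Or.inl rfl)).1 hp1
      have e1b := (hrow x₁ (Or.inl rfl)).2 hA
      have e2a := (hrow x₂ (Or.inr rfl)).1 hp2
      have e2b := (hrow x₂ (Or.inr rfl)).2 hB
      have hq1 : (1 + x₁) * β = 1 - β := le_antisymm e1b e1a
      have hq2 : (1 + x₂) * β = 1 - β := le_antisymm e2b e2a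
      have hβe : β * (2 + x₁) = 1 := by linear_combination hq1
      have hβpos : 0 < β := aux_pos (2 + x₁) β (by linarith [hx₁b.1]) hβe
      have := mul_right_cancel₀ (ne_of_gt hβpos) (hq1.trans hq2.symm)
      exact h12 (by linarith)
    · -- σ₁ x₂ = 1 : z = x₂, y = x₁
      have h1 : σ₁ x₂ = 1 := le_antisymm (hσ₁ x₂ hx₂m).2 (not_lt.mp hB)
      have hs₂0 : σ₂ x₂ = 0 := by
        by_contra h'
        have := hcol₂.1 (lt_of_le_of_ne (hσ₂ x₂ hx₂m).1 (Ne.symm h'))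
        rw [h1] at this
        linarith
      have e1a := (hrow x₁ (Or.inl rfl)).1 hp1
      have e1b := (hrow x₁ (Or.inl rfl)).2 hA
      have hq1 : (1 + x₁) * β = 1 - β := le_antisymm e1b e1a
      have hβeq : β * (2 + x₁) = 1 := by linear_combination hq1
      have hc1 := hclus.1 x₂ (Or.inr rfl)
      have hc2 := hclus.1 x₁ (Or.inl rfl)
      rw [hs₂0] at hc1
      have hs₁ : σ₂ x₁ = 2 * β := by rw [hβdef]; linarith [hs₂0]
      rw [hs₁] at hc2
      have e1 : ((0:ℝ) - β) ^ 2 = β ^ 2 := by ring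
      have e2 : ((0:ℝ) - σ₂ x₃) ^ 2 = (σ₂ x₃) ^ 2 := by ring
      have e3 : (2 * β - β) ^ 2 = β ^ 2 := by ring
      rw [e1, e2] at hc1
      rw [e3] at hc2
      exact aux_mp x₃ x₁ β (σ₂ x₃) hx₃b.1 hx₁b.1 hx₁b.2 (Ne.symm h13) hβeq ht_eq hc1 hc2
  · -- σ₁ x₁ = 1 : z = x₁, y = x₂
    have h1 : σ₁ x₁ = 1 := le_antisymm (hσ₁ x₁ hx₁m).2 (not_lt.mp hA)
    have hs₁0 : σ₂ x₁ = 0 := by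
      by_contra h'
      have := hcol₁.1 (lt_of_le_of_ne (hσ₂ x₁ hx₁m).1 (Ne.symm h'))
      rw [h1] at this
      linarith
    have hB : σ₁ x₂ < 1 := by
      by_contra h
      have h2 : σ₁ x₂ = 1 := le_antisymm (hσ₁ x₂ hx₂m).2 (not_lt.mp h)
      have hs₂0 : σ₂ x₂ = 0 := by
        by_contra h'
        have := hcol₂.1 (lt_of_le_of_ne (hσ₂ x₂ hx₂m).1 (Ne.symm h'))
        rw [h2] at this
        linarith
      have := (hrow x₁ (Or.inl rfl)).1 hp1
      rw [hβdef, hs₁0, hs₂0] at this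
      norm_num at this
    have e2a := (hrow x₂ (Or.inr rfl)).1 hp2
    have e2b := (hrow x₂ (Or.inr rfl)).2 hB
    have hq2 : (1 + x₂) * β = 1 - β := le_antisymm e2b e2a
    have hβeq : β * (2 + x₂) = 1 := by linear_combination hq2
    have hc1 := hclus.1 x₁ (Or.inl rfl)
    have hc2 := hclus.1 x₂ (Or.inr rfl)
    rw [hs₁0] at hc1
    have hs₂ : σ₂ x₂ = 2 * β := by rw [hβdef]; linarith [hs₁0]
    rw [hs₂] at hc2
    have e1 : ((0:ℝ) - β) ^ 2 = β ^ 2 := by ring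
    have e2 : ((0:ℝ) - σ₂ x₃) ^ 2 = (σ₂ x₃) ^ 2 := by ring
    have e3 : (2 * β - β) ^ 2 = β ^ 2 := by ring
    rw [e1, e2] at hc1
    rw [e3] at hc2
    exact aux_mp x₃ x₂ β (σ₂ x₃) hx₃b.1 hx₂b.1 hx₂b.2 (Ne.symm h23) hβeq ht_eq hc1 hc2
end

section
/- In the matching-pennies environment, let An₁ = {{x₁, x₂}, {x₃}} where {x₁, x₂, x₃} = {a, b, c} and x₁ < x₂. Then every ABEE (σ₁, σ₂) given An₁ satisfies: σ₂(x₃) = 1/(2 + x₃), σ₁(x₃) = 1/2, β({x₁, x₂}) = 1/(2 + x₁), σ₁(x₂) = 1, σ₂(x₂) = 0, σ₂(x₁) = 2/(2 + x₁), and σ₁(x₁) = 1/2. -/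
set_option maxHeartbeats 1000000 in
/-- **Characterization of all ABEE in the matching-pennies environment** for the row
player's analogy partition `{{x₁, x₂}, {x₃}}` with `x₁ < x₂`.

Three matching-pennies games indexed by `x ∈ {a, b, c}` with `0 < a < b < c < 2`, each
played with probability `1/3`.  `σ₁ x` is the probability of `U`, `σ₂ x` the probability
of `L` in game `x`; the column player partitions finely, while the row player's
analogy-based expectation in the pair class is `β = (σ₂ x₁ + σ₂ x₂) / 2` and in the
singleton class it is `σ₂ x₃`.  Every ABEE satisfies:
`σ₂ x₃ = 1/(2+x₃)`, `σ₁ x₃ = 1/2`, `β = 1/(2+x₁)`, `σ₁ x₂ = 1`, `σ₂ x₂ = 0`,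
`σ₂ x₁ = 2/(2+x₁)` and `σ₁ x₁ = 1/2`. -/
theorem matching_pennies_ABEE_characterization
    (a b c : ℝ) (ha : 0 < a) (hab : a < b) (hbc : b < c) (hc2 : c < 2)
    (σ₁ σ₂ : ℝ → ℝ)
    (hσ₁ : ∀ x ∈ ({a, b, c} : Set ℝ), σ₁ x ∈ Set.Icc (0 : ℝ) 1)
    (hσ₂ : ∀ x ∈ ({a, b, c} : Set ℝ), σ₂ x ∈ Set.Icc (0 : ℝ) 1)
    (x₁ x₂ x₃ : ℝ) (hset : ({x₁, x₂, x₃} : Set ℝ) = {a, b, c}) (h12 : x₁ < x₂)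
    -- row player's best response in the pair class {x₁, x₂}
    (hrow : ∀ x, (x = x₁ ∨ x = x₂) →
      (0 < σ₁ x → 1 - (σ₂ x₁ + σ₂ x₂) / 2 ≤ (1 + x) * ((σ₂ x₁ + σ₂ x₂) / 2)) ∧
      (σ₁ x < 1 → (1 + x) * ((σ₂ x₁ + σ₂ x₂) / 2) ≤ 1 - (σ₂ x₁ + σ₂ x₂) / 2))
    -- row player's best response in the singleton class {x₃}
    (hrow₃ : (0 < σ₁ x₃ → 1 - σ₂ x₃ ≤ (1 + x₃) * σ₂ x₃) ∧
      (σ₁ x₃ < 1 → (1 + x₃) * σ₂ x₃ ≤ 1 - σ₂ x₃))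
    -- column player's best responses
    (hcol : ∀ x ∈ ({a, b, c} : Set ℝ),
      (0 < σ₂ x → σ₁ x ≤ 1 - σ₁ x) ∧ (σ₂ x < 1 → 1 - σ₁ x ≤ σ₁ x)) :
    σ₂ x₃ = 1 / (2 + x₃) ∧
    σ₁ x₃ = 1 / 2 ∧
    (σ₂ x₁ + σ₂ x₂) / 2 = 1 / (2 + x₁) ∧
    σ₁ x₂ = 1 ∧
    σ₂ x₂ = 0 ∧
    σ₂ x₁ = 2 / (2 + x₁) ∧
    σ₁ x₁ = 1 / 2 := by

  have hx₁m : x₁ ∈ ({a, b, c} : Set ℝ) := by rw [← hset]; simp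
  have hx₂m : x₂ ∈ ({a, b, c} : Set ℝ) := by rw [← hset]; simp
  have hx₃m : x₃ ∈ ({a, b, c} : Set ℝ) := by rw [← hset]; simp
  have hpos : ∀ x ∈ ({a, b, c} : Set ℝ), 0 < x ∧ x < 2 := by
    intro x hx
    rcases hx with h | h | h <;> subst h <;> exact ⟨by linarith, by linarith⟩
  obtain ⟨hx₁0, hx₁2⟩ := hpos _ hx₁m
  obtain ⟨hx₂0, hx₂2⟩ := hpos _ hx₂m
  obtain ⟨hx₃0, hx₃2⟩ := hpos _ hx₃m
  obtain ⟨hs₁₁0, hs₁₁1⟩ := hσ₁ _ hx₁m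
  obtain ⟨hs₁₂0, hs₁₂1⟩ := hσ₁ _ hx₂m
  obtain ⟨hs₁₃0, hs₁₃1⟩ := hσ₁ _ hx₃m
  obtain ⟨hs₂₁0, hs₂₁1⟩ := hσ₂ _ hx₁m
  obtain ⟨hs₂₂0, hs₂₂1⟩ := hσ₂ _ hx₂m
  obtain ⟨hs₂₃0, hs₂₃1⟩ := hσ₂ _ hx₃m
  obtain ⟨hc₁a, hc₁b⟩ := hcol _ hx₁m
  obtain ⟨hc₂a, hc₂b⟩ := hcol _ hx₂m
  obtain ⟨hc₃a, hc₃b⟩ := hcol _ hx₃m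
  have h2x₁ : (0:ℝ) < 2 + x₁ := by linarith
  have h2x₃ : (0:ℝ) < 2 + x₃ := by linarith
  -- singleton class
  have hσ₂x₃ : σ₂ x₃ = 1 / (2 + x₃) := by
    rcases lt_trichotomy (σ₂ x₃) (1 / (2 + x₃)) with h | h | h
    · have key : (1 + x₃) * σ₂ x₃ < 1 - σ₂ x₃ := by
        rw [lt_div_iff₀ h2x₃] at h; nlinarith
      have h10 : σ₁ x₃ = 0 := by
        by_contra hne
        have := hrow₃.1 (lt_of_le_of_ne hs₁₃0 (Ne.symm hne))
        linarith
      have hlt1 : σ₂ x₃ < 1 := by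
        have : 1 / (2 + x₃) < 1 := by rw [div_lt_one h2x₃]; linarith
        linarith
      have := hc₃b hlt1
      linarith
    · exact h
    · have key : 1 - σ₂ x₃ < (1 + x₃) * σ₂ x₃ := by
        rw [div_lt_iff₀ h2x₃] at h; nlinarith
      have h11 : σ₁ x₃ = 1 := by
        by_contra hne
        have := hrow₃.2 (lt_of_le_of_ne hs₁₃1 hne)
        linarith
      have hpos3 : 0 < σ₂ x₃ := lt_trans (by positivity) h
      have := hc₃a hpos3
      linarith
  have hσ₁x₃ : σ₁ x₃ = 1 / 2 := by
    have hpos3 : 0 < σ₂ x₃ := by rw [hσ₂x₃]; positivity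
    have hlt3 : σ₂ x₃ < 1 := by
      rw [hσ₂x₃, div_lt_one h2x₃]; linarith
    have h1 := hc₃a hpos3
    have h2 := hc₃b hlt3
    linarith
  -- pair class
  have hβ : (σ₂ x₁ + σ₂ x₂) / 2 = 1 / (2 + x₁) := by
    rcases lt_trichotomy ((σ₂ x₁ + σ₂ x₂) / 2) (1 / (2 + x₁)) with h | h | h
    · have key : (1 + x₁) * ((σ₂ x₁ + σ₂ x₂) / 2) < 1 - (σ₂ x₁ + σ₂ x₂) / 2 := by
        rw [lt_div_iff₀ h2x₁] at h; nlinarith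
      have h10 : σ₁ x₁ = 0 := by
        by_contra hne
        have := (hrow x₁ (Or.inl rfl)).1 (lt_of_le_of_ne hs₁₁0 (Ne.symm hne))
        linarith
      have hs1 : σ₂ x₁ = 1 := by
        by_contra hne
        have := hc₁b (lt_of_le_of_ne hs₂₁1 hne)
        linarith
      have hhalf : 1 / (2 + x₁) < 1 / 2 := by
        rw [div_lt_div_iff₀ h2x₁ (by norm_num)]; linarith
      rw [hs1] at h
      linarith
    · exact h
    · have hβpos : 0 < (σ₂ x₁ + σ₂ x₂) / 2 := lt_trans (by positivity) h
      have key : 1 - (σ₂ x₁ + σ₂ x₂) / 2 < (1 + x₁) * ((σ₂ x₁ + σ₂ x₂) / 2) := by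
        rw [div_lt_iff₀ h2x₁] at h; nlinarith
      have key2 : 1 - (σ₂ x₁ + σ₂ x₂) / 2 < (1 + x₂) * ((σ₂ x₁ + σ₂ x₂) / 2) := by
        nlinarith
      have h11 : σ₁ x₁ = 1 := by
        by_contra hne
        have := (hrow x₁ (Or.inl rfl)).2 (lt_of_le_of_ne hs₁₁1 hne)
        linarith
      have h21 : σ₁ x₂ = 1 := by
        by_contra hne
        have := (hrow x₂ (Or.inr rfl)).2 (lt_of_le_of_ne hs₁₂1 hne)
        linarith
      have hz1 : σ₂ x₁ = 0 := by
        by_contra hne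
        have := hc₁a (lt_of_le_of_ne hs₂₁0 (Ne.symm hne))
        linarith
      have hz2 : σ₂ x₂ = 0 := by
        by_contra hne
        have := hc₂a (lt_of_le_of_ne hs₂₂0 (Ne.symm hne))
        linarith
      rw [hz1, hz2] at hβpos
      linarith
  have hβpos : 0 < (σ₂ x₁ + σ₂ x₂) / 2 := by rw [hβ]; positivity
  have hσ₁x₂ : σ₁ x₂ = 1 := by
    by_contra hne
    have hle := (hrow x₂ (Or.inr rfl)).2 (lt_of_le_of_ne hs₁₂1 hne)
    have h1 := (hrow x₁ (Or.inl rfl))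
    -- (1+x₁)β = 1-β from hβ, and (1+x₂)β > (1+x₁)β
    have heq : (1 + x₁) * ((σ₂ x₁ + σ₂ x₂) / 2) = 1 - (σ₂ x₁ + σ₂ x₂) / 2 := by
      rw [hβ]; field_simp; ring
    have hd : 0 < (x₂ - x₁) * ((σ₂ x₁ + σ₂ x₂) / 2) := mul_pos (by linarith) hβpos
    linarith [hd, heq, hle]
  have hσ₂x₂ : σ₂ x₂ = 0 := by
    by_contra hne
    have := hc₂a (lt_of_le_of_ne hs₂₂0 (Ne.symm hne))
    linarith
  have hσ₂x₁ : σ₂ x₁ = 2 / (2 + x₁) := by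
    rw [hσ₂x₂] at hβ
    field_simp at hβ ⊢
    linarith
  have hσ₁x₁ : σ₁ x₁ = 1 / 2 := by
    have hpos1 : 0 < σ₂ x₁ := by rw [hσ₂x₁]; positivity
    have hlt1 : σ₂ x₁ < 1 := by
      rw [hσ₂x₁, div_lt_one h2x₁]; linarith
    have h1 := hc₁a hpos1
    have h2 := hc₁b hlt1
    linarith
  exact ⟨hσ₂x₃, hσ₁x₃, hβ, hσ₁x₂, hσ₂x₂, hσ₂x₁, hσ₁x₁⟩
end

section
/- In the beauty contest environment, fix a K-class analogy partition (Θ_k)_{k=1}^K and 0 < r < 1. If a₁, a₂ : Θ → ℝ are ν-integrable and satisfy, for each i = 1,2 and each k, a_i(θ) = (1 − r)θ + r E_ν[a_j | Θ_k] for ν-almost every θ ∈ Θ_k (j ≠ i), then E_ν[a_i | Θ_k] = θ̄_k for every i and k, and a₁(θ) = a₂(θ) = (1 − r)θ + r θ̄_k for ν-almost every θ ∈ Θ_k. In particular, the ABEE given the partition exists, is symmetric, and is unique up to ν-null sets. -/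
open MeasureTheory

/-- Conditional mean of `h` on the set `S` under the measure `ν`. -/
noncomputable def condMean (ν : Measure ℝ) (h : ℝ → ℝ) (S : Set ℝ) : ℝ :=
  (∫ θ in S, h θ ∂ν) / (ν S).toReal

/-! Taking conditional means of both best-response equations on a class `Θ k` turns them into
the linear system `m₁ = (1 - r) θ̄ + r m₂`, `m₂ = (1 - r) θ̄ + r m₁`, whose unique solution for
`r ≠ ±1` is `m₁ = m₂ = θ̄`; substituting back gives the strategies. -/

section condMean

variable {ν : Measure ℝ} {S : Set ℝ}

theorem condMean_congr_ae {f g : ℝ → ℝ} (hS : MeasurableSet S)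
    (hfg : ∀ᵐ θ ∂ν, θ ∈ S → f θ = g θ) : condMean ν f S = condMean ν g S := by
  rw [condMean, condMean, setIntegral_congr_ae hS hfg]

theorem condMean_affine [IsFiniteMeasure ν] (hS : ν S ≠ 0)
    (hid : IntegrableOn (fun θ => θ) S ν) (α β : ℝ) :
    condMean ν (fun θ => α * θ + β) S = α * condMean ν (fun θ => θ) S + β := by
  have hS' : (ν S).toReal ≠ 0 := ENNReal.toReal_ne_zero.2 ⟨hS, measure_ne_top ν S⟩
  rw [condMean, condMean, integral_add (hid.const_mul α) (integrableOn_const (measure_ne_top ν S)),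
    integral_const_mul, setIntegral_const, measureReal_def, smul_eq_mul]
  field_simp

theorem integrableOn_id_of_isBounded [IsFiniteMeasure ν] (hS : MeasurableSet S)
    (hb : Bornology.IsBounded S) : IntegrableOn (fun θ => θ) S ν := by
  obtain ⟨C, hC⟩ := hb.exists_norm_le
  refine Measure.integrableOn_of_bounded (M := C) (measure_ne_top ν S) aestronglyMeasurable_id ?_
  filter_upwards [ae_restrict_mem hS] with θ hθ using hC θ hθ

end condMean

theorem eq_of_symmetric_best_response {r t m₁ m₂ : ℝ} (hr : r ≠ 1) (hr' : r ≠ -1)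
    (h₁ : m₁ = (1 - r) * t + r * m₂) (h₂ : m₂ = (1 - r) * t + r * m₁) :
    m₁ = t ∧ m₂ = t := by
  have h₁₂ : m₁ = m₂ := by
    have : (1 + r) * (m₁ - m₂) = 0 := by linear_combination h₁ - h₂
    have h1r : 1 + r ≠ 0 := fun h => hr' (by linarith)
    linarith [(mul_eq_zero.1 this).resolve_left h1r]
  have : (1 - r) * (m₁ - t) = 0 := by linear_combination h₁ - r * h₁₂
  have h1r : 1 - r ≠ 0 := sub_ne_zero.2 (Ne.symm hr)
  have := (mul_eq_zero.1 this).resolve_left h1r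
  constructor <;> linarith

theorem beauty_contest_ABEE_unique_general
    (ν : Measure ℝ) [IsProbabilityMeasure ν]
    (K : ℕ) (Θ : Fin K → Set ℝ)
    (hmeas : ∀ k, MeasurableSet (Θ k))
    (hpos : ∀ k, 0 < ν (Θ k))
    (hbdd : Bornology.IsBounded (⋃ k, Θ k))
    (r : ℝ) (hr0 : 0 < r) (hr1 : r < 1)
    (a₁ a₂ : ℝ → ℝ)
    (hbe₁ : ∀ k, ∀ᵐ θ ∂ν, θ ∈ Θ k →
      a₁ θ = (1 - r) * θ + r * condMean ν a₂ (Θ k))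
    (hbe₂ : ∀ k, ∀ᵐ θ ∂ν, θ ∈ Θ k →
      a₂ θ = (1 - r) * θ + r * condMean ν a₁ (Θ k)) :
    (∀ k, condMean ν a₁ (Θ k) = condMean ν (fun θ => θ) (Θ k) ∧
          condMean ν a₂ (Θ k) = condMean ν (fun θ => θ) (Θ k)) ∧
    (∀ k, ∀ᵐ θ ∂ν, θ ∈ Θ k →
      a₁ θ = (1 - r) * θ + r * condMean ν (fun θ' => θ') (Θ k) ∧
      a₂ θ = (1 - r) * θ + r * condMean ν (fun θ' => θ') (Θ k)) := by
  have hmean : ∀ k (f : ℝ → ℝ) (c : ℝ), (∀ᵐ θ ∂ν, θ ∈ Θ k → f θ = (1 - r) * θ + r * c) →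
      condMean ν f (Θ k) = (1 - r) * condMean ν (fun θ => θ) (Θ k) + r * c := fun k f c hf =>
    (condMean_congr_ae (hmeas k) hf).trans <| condMean_affine (hpos k).ne'
      (integrableOn_id_of_isBounded (hmeas k) (hbdd.subset (Set.subset_iUnion Θ k))) _ _
  have hmeans k := eq_of_symmetric_best_response (by linarith) (by linarith)
    (hmean k a₁ _ (hbe₁ k)) (hmean k a₂ _ (hbe₂ k))
  refine ⟨hmeans, fun k => ?_⟩
  filter_upwards [hbe₁ k, hbe₂ k] with θ h₁ h₂ hθ
  rw [(hmeans k).1] at h₂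
  rw [(hmeans k).2] at h₁
  exact ⟨h₁ hθ, h₂ hθ⟩

/-- **Uniqueness and symmetry of the ABEE in the beauty contest game** given a `K`-class
analogy partition `(Θ k)` of the (bounded) support of the fundamental `θ ∼ ν`.

If the integrable strategies `a₁, a₂` satisfy, for each player `i` and each class `k`,
`a_i θ = (1 - r) θ + r E_ν[a_j | Θ k]` for ν-a.e. `θ ∈ Θ k`, then every conditional mean
`E_ν[a_i | Θ k]` equals `θ̄_k = E_ν[θ | Θ k]`, and for ν-a.e. `θ ∈ Θ k` both players play
`(1 - r) θ + r θ̄_k`. -/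
theorem beauty_contest_ABEE_unique
    (ν : Measure ℝ) [IsProbabilityMeasure ν]
    (K : ℕ) (hK : 1 ≤ K) (Θ : Fin K → Set ℝ)
    (hmeas : ∀ k, MeasurableSet (Θ k))
    (hdisj : Pairwise fun k k' => Disjoint (Θ k) (Θ k'))
    (hcover : ν (⋃ k, Θ k) = 1)
    (hpos : ∀ k, 0 < ν (Θ k))
    (hbdd : Bornology.IsBounded (⋃ k, Θ k))
    (r : ℝ) (hr0 : 0 < r) (hr1 : r < 1)
    (a₁ a₂ : ℝ → ℝ) (hi₁ : Integrable a₁ ν) (hi₂ : Integrable a₂ ν)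
    (hbe₁ : ∀ k, ∀ᵐ θ ∂ν, θ ∈ Θ k →
      a₁ θ = (1 - r) * θ + r * condMean ν a₂ (Θ k))
    (hbe₂ : ∀ k, ∀ᵐ θ ∂ν, θ ∈ Θ k →
      a₂ θ = (1 - r) * θ + r * condMean ν a₁ (Θ k)) :
    (∀ k, condMean ν a₁ (Θ k) = condMean ν (fun θ => θ) (Θ k) ∧
          condMean ν a₂ (Θ k) = condMean ν (fun θ => θ) (Θ k)) ∧
    (∀ k, ∀ᵐ θ ∂ν, θ ∈ Θ k →
      a₁ θ = (1 - r) * θ + r * condMean ν (fun θ' => θ') (Θ k) ∧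
      a₂ θ = (1 - r) * θ + r * condMean ν (fun θ' => θ') (Θ k)) :=
  beauty_contest_ABEE_unique_general ν K Θ hmeas hpos hbdd r hr0 hr1 a₁ a₂ hbe₁ hbe₂
end

section
/- In the beauty contest environment, take any K-class analogy partition (Θ_k)_{k=1}^K such that the conditional means θ̄₁, …, θ̄_K are pairwise distinct. Then there exists r* ∈ (0,1) such that for every r with r* < r < 1, the partition is locally clustered with respect to the ABEE strategy a_r; hence, when both players use this analogy partition and play a_r, the pair forms a clustered analogy-based expectation equilibrium. -/
/-!
The action `a_r θ = (1 - r) θ + r θ̄_k` is at distance `(1 - r) |θ - θ̄_k|` from its own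
prototype, and `|θ - θ̄_k|` is bounded by the diameter of the bounded support. Distinct
prototypes are a fixed positive distance apart, since there are finitely many. So once `1 - r`
is small enough, the own prototype is the nearest one.
-/

open MeasureTheory

open Filter Topology

theorem norm_condMean_le {ν : Measure ℝ} {h : ℝ → ℝ} {S : Set ℝ} {M : ℝ} (hM : 0 ≤ M)
    (hh : ∀ x ∈ S, ‖h x‖ ≤ M) : ‖condMean ν h S‖ ≤ M := by
  rcases (ENNReal.toReal_nonneg (a := ν S)).eq_or_lt with h0 | hpos
  · -- junk case `ν S ∈ {0, ∞}`, where the division by `0` makes `condMean` vanish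
    simp [condMean, ← h0, hM]
  · rw [condMean, norm_div, Real.norm_of_nonneg hpos.le, div_le_iff₀ hpos]
    exact norm_setIntegral_le_of_norm_le_const (ENNReal.toReal_pos_iff.1 hpos).2 hh

theorem Function.Injective.exists_pos_le_dist {ι X : Type*} [Finite ι] [MetricSpace X]
    {m : ι → X} (hm : Function.Injective m) :
    ∃ d > 0, ∀ i j, i ≠ j → d ≤ dist (m i) (m j) := by
  have hsep : ∀ i j, ∀ᶠ ε in 𝓝 (0 : ℝ), i ≠ j → ε ≤ dist (m i) (m j) := by
    intro i j
    by_cases hij : i = j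
    · simp [hij]
    · exact (eventually_le_nhds (dist_pos.2 (hm.ne hij))).mono fun _ h _ => h
  simp only [← eventually_all] at hsep
  exact (eventually_mem_nhdsWithin (s := Set.Ioi 0) (a := 0)).and
    (hsep.filter_mono nhdsWithin_le_nhds) |>.exists

theorem sq_le_sq_add_of_two_mul_abs_le {a c : ℝ} (h : 2 * |a| ≤ |c|) :
    a ^ 2 ≤ (a + c) ^ 2 := by
  have hc := abs_sub_abs_le_abs_add c a
  rw [add_comm c a] at hc
  rw [sq_le_sq]
  linarith

theorem sq_mix_sub_le_sq_mix_sub {θ m m' r B : ℝ} (hr : r ≤ 1) (hθ : |θ - m| ≤ B)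
    (hsep : 2 * (1 - r) * B ≤ |m - m'|) :
    ((1 - r) * θ + r * m - m) ^ 2 ≤ ((1 - r) * θ + r * m - m') ^ 2 := by
  have hmix : (1 - r) * θ + r * m - m' = (1 - r) * (θ - m) + (m - m') := by ring
  rw [hmix, show (1 - r) * θ + r * m - m = (1 - r) * (θ - m) by ring]
  apply sq_le_sq_add_of_two_mul_abs_le
  rw [abs_mul, abs_of_nonneg (sub_nonneg.2 hr)]
  linarith [mul_le_mul_of_nonneg_left hθ (sub_nonneg.2 hr)]

theorem beauty_contest_self_attractive_general
    (ν : Measure ℝ)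
    (K : ℕ) (Θ : Fin K → Set ℝ)
    (hbdd : Bornology.IsBounded (⋃ k, Θ k))
    (hdist : ∀ k k' : Fin K, k ≠ k' →
      condMean ν (fun θ => θ) (Θ k) ≠ condMean ν (fun θ => θ) (Θ k')) :
    ∃ rstar : ℝ, 0 < rstar ∧ rstar < 1 ∧
      ∀ r : ℝ, rstar < r → r < 1 →
        ∀ k k' : Fin K, ∀ θ ∈ Θ k,
          ((1 - r) * θ + r * condMean ν (fun θ' => θ') (Θ k)
              - condMean ν (fun θ' => θ') (Θ k)) ^ 2 ≤
            ((1 - r) * θ + r * condMean ν (fun θ' => θ') (Θ k)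
              - condMean ν (fun θ' => θ') (Θ k')) ^ 2 := by
  set m : Fin K → ℝ := fun k => condMean ν (fun θ' => θ') (Θ k)
  obtain ⟨M, hM0, hM⟩ := hbdd.exists_pos_norm_le
  have hθ : ∀ k, ∀ θ ∈ Θ k, ‖θ‖ ≤ M := fun k θ hθk =>
    hM θ (Set.mem_iUnion_of_mem k hθk)
  have hdiam : ∀ k, ∀ θ ∈ Θ k, |θ - m k| ≤ 2 * M := fun k θ hθk => by
    rw [← Real.norm_eq_abs]
    linarith [norm_sub_le θ (m k), hθ k θ hθk, norm_condMean_le (ν := ν) hM0.le (hθ k)]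
  obtain ⟨d, hd0, hd⟩ :=
    (Function.injective_iff_pairwise_ne.2 hdist).exists_pos_le_dist
  set ε := d / (2 * (2 * M + d)) with hε
  have hε0 : 0 < ε := by positivity
  have hε1 : ε < 1 := by rw [div_lt_one (by positivity)]; linarith
  have hεd : 2 * ε * (2 * M) ≤ d := by
    rw [hε]
    field_simp
    nlinarith
  refine ⟨1 - ε, by linarith, by linarith, fun r hr hr1 k k' θ hθk => ?_⟩
  rcases eq_or_ne k k' with rfl | hkk'
  · exact le_rfl
  · have hsep : 2 * (1 - r) * (2 * M) ≤ |m k - m k'| := by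
      rw [← Real.dist_eq]
      nlinarith [hd k k' hkk']
    exact sq_mix_sub_le_sq_mix_sub hr1.le (hdiam k θ hθk) hsep

/-- **Self-attractive analogy partitions in the beauty contest game** (Proposition 2).

For any `K`-class analogy partition `(Θ k)` of the (bounded) support of `θ ∼ ν` whose
conditional means `θ̄_k = E_ν[θ | Θ k]` are pairwise distinct, there is `r* ∈ (0, 1)`
such that for every coordination weight `r ∈ (r*, 1)` the partition is locally clustered
with respect to the ABEE strategy `a_r θ = (1 - r) θ + r θ̄_k` (for `θ ∈ Θ k`); hence both
players using this partition and playing `a_r` form a clustered ABEE. -/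
theorem beauty_contest_self_attractive
    (ν : Measure ℝ) [IsProbabilityMeasure ν]
    (K : ℕ) (hK : 1 ≤ K) (Θ : Fin K → Set ℝ)
    (hmeas : ∀ k, MeasurableSet (Θ k))
    (hdisj : Pairwise fun k k' => Disjoint (Θ k) (Θ k'))
    (hcover : ν (⋃ k, Θ k) = 1)
    (hpos : ∀ k, 0 < ν (Θ k))
    (hbdd : Bornology.IsBounded (⋃ k, Θ k))
    (hdist : ∀ k k' : Fin K, k ≠ k' →
      condMean ν (fun θ => θ) (Θ k) ≠ condMean ν (fun θ => θ) (Θ k')) :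
    ∃ rstar : ℝ, 0 < rstar ∧ rstar < 1 ∧
      ∀ r : ℝ, rstar < r → r < 1 →
        ∀ k k' : Fin K, ∀ θ ∈ Θ k,
          ((1 - r) * θ + r * condMean ν (fun θ' => θ') (Θ k)
              - condMean ν (fun θ' => θ') (Θ k)) ^ 2 ≤
            ((1 - r) * θ + r * condMean ν (fun θ' => θ') (Θ k)
              - condMean ν (fun θ' => θ') (Θ k')) ^ 2 :=
  beauty_contest_self_attractive_general ν K Θ hbdd hdist
end

section
/- In the beauty contest environment, let (Θ_k)_{k=1}^K be a K-class analogy partition and let 0 < r ≤ r' < 1. If the partition is locally clustered with respect to the ABEE strategy a_r, then it is locally clustered with respect to the ABEE strategy a_{r'}. That is, if (a_r(θ) − θ̄_k)² ≤ (a_r(θ) − θ̄_{k'})² for all k, k' and all θ ∈ Θ_k, then (a_{r'}(θ) − θ̄_k)² ≤ (a_{r'}(θ) − θ̄_{k'})² for all k, k' and all θ ∈ Θ_k. -/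
open MeasureTheory

/-- **Monotonicity of local clustering in the coordination weight** in the beauty
contest game (Proposition 3).

Let `(Θ k)` be a `K`-class analogy partition of the (bounded) support of `θ ∼ ν`, with
conditional means `θ̄_k = E_ν[θ | Θ k]`, and let `0 < r ≤ r' < 1`.  If the partition is
locally clustered with respect to the ABEE strategy `a_r θ = (1 - r) θ + r θ̄_k`
(for `θ ∈ Θ k`), then it is locally clustered with respect to `a_{r'}`. -/
theorem beauty_contest_locally_clustered_monotone
    (ν : Measure ℝ) [IsProbabilityMeasure ν]
    (K : ℕ) (hK : 1 ≤ K) (Θ : Fin K → Set ℝ)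
    (hmeas : ∀ k, MeasurableSet (Θ k))
    (hdisj : Pairwise fun k k' => Disjoint (Θ k) (Θ k'))
    (hcover : ν (⋃ k, Θ k) = 1)
    (hpos : ∀ k, 0 < ν (Θ k))
    (hbdd : Bornology.IsBounded (⋃ k, Θ k))
    (r r' : ℝ) (hr0 : 0 < r) (hrr' : r ≤ r') (hr'1 : r' < 1)
    (hlc : ∀ k k' : Fin K, ∀ θ ∈ Θ k,
      ((1 - r) * θ + r * condMean ν (fun θ' => θ') (Θ k)
          - condMean ν (fun θ' => θ') (Θ k)) ^ 2 ≤
        ((1 - r) * θ + r * condMean ν (fun θ' => θ') (Θ k)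
          - condMean ν (fun θ' => θ') (Θ k')) ^ 2) :
    ∀ k k' : Fin K, ∀ θ ∈ Θ k,
      ((1 - r') * θ + r' * condMean ν (fun θ' => θ') (Θ k)
          - condMean ν (fun θ' => θ') (Θ k)) ^ 2 ≤
        ((1 - r') * θ + r' * condMean ν (fun θ' => θ') (Θ k)
          - condMean ν (fun θ' => θ') (Θ k')) ^ 2 := by
  intro k k' θ hθ
  have h := hlc k k' θ hθ
  set m := condMean ν (fun θ' => θ') (Θ k)
  set m' := condMean ν (fun θ' => θ') (Θ k')
  rcases le_or_gt 0 ((θ - m) * (m - m')) with hs | hs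
  · nlinarith [sq_nonneg (θ - m), sq_nonneg (m - m'), mul_nonneg (by linarith : (0:ℝ) ≤ 1 - r') hs]
  · nlinarith [mul_le_mul_of_nonpos_right (by linarith : 1 - r' ≤ 1 - r) (le_of_lt hs)]
end

section
/- In the monitoring game, assume p_c ≤ p_a, p_c ≤ p_b, p_c/(p_a + p_c) < ν* < p_b/(p_b + p_c), and ν* ≠ p_b/(p_a + p_b). Then there is no pure clustered analogy-based expectation equilibrium in which the employer uses a single two-class analogy partition: there is no triple (An, m, ζ), where An is a partition of {a,b,c} into two nonempty classes, m : {a,b,c} → [0,1] gives the employer's control probabilities, and ζ ∈ [0,1] is type c's probability of low effort, satisfying simultaneously: (i) worker best response: m(c) < μ* ⇒ ζ = 1 and m(c) > μ* ⇒ ζ = 0; (ii) employer best response: for each ω ∈ {a,b,c}, writing α for the class of An containing ω, β₁(α) < ν* ⇒ m(ω) = 1 and β₁(α) > ν* ⇒ m(ω) = 0; (iii) local clustering: (e₁(ω) − β₁(α))² ≤ (e₁(ω) − β₁(α'))² for all classes α, α' of An and all ω ∈ α. -/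
/-- The three worker types of the monitoring game. -/
inductive Typ : Type
  | a | b | c
  deriving DecidableEq

instance : Fintype Typ :=
  ⟨{Typ.a, Typ.b, Typ.c}, fun x => by cases x <;> simp⟩

/-- Probabilities of the worker types. -/
noncomputable def pmap (pa pb pc : ℝ) : Typ → ℝ
  | .a => pa
  | .b => pb
  | .c => pc

/-- Probability of high effort of each worker type, when type `c` chooses low effort
with probability `ζ`. -/
noncomputable def emap (ζ : ℝ) : Typ → ℝ
  | .a => 0
  | .b => 1
  | .c => 1 - ζ

/-- The analogy class (fiber) of type `ω` under the two-class partition encoded by `g`. -/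
def cls (g : Typ → Bool) (ω : Typ) : Finset Typ :=
  Finset.univ.filter fun ω' => g ω' = g ω

/-- The employer's analogy-based expectation of high effort on the class `α`. -/
noncomputable def beta1 (p e : Typ → ℝ) (α : Finset Typ) : ℝ :=
  (∑ ω ∈ α, p ω * e ω) / ∑ ω ∈ α, p ω

/-!
A two-class partition of `{a,b,c}` is determined by the class of `c`: `{b,c}`, `{a,c}` or `{c}`.
If `c` is pooled with `b` (resp. `a`), the pooled expectation lies above (resp. below) `ν*`,
so the employer does not control (resp. controls) `c`, and `c` shirks (resp. works). Then `c`
behaves exactly like the singleton class of `a` (resp. `b`), whose expectation is pure, and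
local clustering would force the pooled expectation to equal it, which contradicts its
position relative to `ν*`. If `c` is alone, the two best responses force `1 - ζ = ν*`, and
local clustering of `a` and `b` pins the common expectation `p_b/(p_a+p_b)` of `{a,b}`
to `ν*` from both sides.
-/

theorem Typ.forall {P : Typ → Prop} : (∀ ω, P ω) ↔ P .a ∧ P .b ∧ P .c :=
  ⟨fun h => ⟨h _, h _, h _⟩, fun ⟨ha, hb, hc⟩ ω => by cases ω <;> assumption⟩

theorem cls_cases (g : Typ → Bool) (hgt : ∃ ω, g ω = true) (hgf : ∃ ω, g ω = false) :
    (cls g .a = {.a} ∧ cls g .c = {.b, .c}) ∨ (cls g .b = {.b} ∧ cls g .c = {.a, .c}) ∨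
      (cls g .a = {.a, .b} ∧ cls g .b = {.a, .b} ∧ cls g .c = {.c}) := by
  obtain ⟨x, hx⟩ := hgt
  obtain ⟨y, hy⟩ := hgf
  simp only [cls, Finset.ext_iff, Finset.mem_filter, Finset.mem_univ, true_and,
    Finset.mem_insert, Finset.mem_singleton, Typ.forall]
  cases ha : g .a <;> cases hb : g .b <;> cases hc : g .c <;> cases x <;> cases y <;> simp_all

theorem beta1_singleton (p e : Typ → ℝ) {ω : Typ} (hω : p ω ≠ 0) : beta1 p e {ω} = e ω := by
  simp [beta1, hω]

theorem beta1_pair (p e : Typ → ℝ) {ω ω' : Typ} (h : ω ≠ ω') :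
    beta1 p e {ω, ω'} = (p ω * e ω + p ω' * e ω') / (p ω + p ω') := by
  simp only [beta1, Finset.sum_pair h]

theorem eq_of_sq_sub_le_sq_sub_self {x y : ℝ} (h : (x - y) ^ 2 ≤ (x - x) ^ 2) : y = x := by
  rw [sub_self, zero_pow two_ne_zero, sq_nonpos_iff, sub_eq_zero] at h
  exact h.symm

theorem eq_of_sq_le_sq_of_one_sub_sq_le {q ν : ℝ} (hν0 : 0 ≤ ν) (hν1 : ν ≤ 1)
    (h0 : (0 - q) ^ 2 ≤ (0 - ν) ^ 2) (h1 : (1 - q) ^ 2 ≤ (1 - ν) ^ 2) : q = ν := by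
  rw [zero_sub, zero_sub, neg_sq, neg_sq] at h0
  have hq_le := (abs_le_of_sq_le_sq' h0 hν0).2
  have hle_q := (abs_le_of_sq_le_sq' h1 (sub_nonneg.2 hν1)).2
  linarith

section BestResponses

variable {μs νs ζ β : ℝ} {m : Typ → ℝ}

theorem zeta_eq_one_of_lt (hμ0 : 0 < μs) (hw : m .c < μs → ζ = 1)
    (he : νs < β → m .c = 0) (h : νs < β) : ζ = 1 :=
  hw (by rw [he h]; exact hμ0)

theorem zeta_eq_zero_of_lt (hμ1 : μs < 1) (hw : μs < m .c → ζ = 0)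
    (he : β < νs → m .c = 1) (h : β < νs) : ζ = 0 :=
  hw (by rw [he h]; exact hμ1)

end BestResponses

section Partitions

variable {pa pb pc μs νs ζ : ℝ} {g : Typ → Bool} {m : Typ → ℝ}

theorem false_of_cls_c_eq_bc (hpb : 0 < pb) (hpc : 0 < pc) (hμ0 : 0 < μs) (hν0 : 0 < νs)
    (hν_hi : νs < pb / (pb + pc)) (hζ1 : ζ ≤ 1)
    (hA : cls g .a = {.a}) (hC : cls g .c = {.b, .c})
    (hw : m .c < μs → ζ = 1)
    (he : νs < beta1 (pmap pa pb pc) (emap ζ) (cls g .c) → m .c = 0)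
    (hlc : (emap ζ .c - beta1 (pmap pa pb pc) (emap ζ) (cls g .c)) ^ 2 ≤
      (emap ζ .c - beta1 (pmap pa pb pc) (emap ζ) (cls g .a)) ^ 2) : False := by
  have hβc : beta1 (pmap pa pb pc) (emap ζ) (cls g .c) = (pb + pc * (1 - ζ)) / (pb + pc) := by
    rw [hC, beta1_pair _ _ (by decide)]
    simp [pmap, emap]
  have hν_lt : νs < beta1 (pmap pa pb pc) (emap ζ) (cls g .c) := by
    rw [hβc]
    refine hν_hi.trans_le (div_le_div_of_nonneg_right ?_ (by positivity))
    nlinarith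
  obtain rfl := zeta_eq_one_of_lt hμ0 hw he hν_lt
  have hβa : beta1 (pmap pa pb pc) (emap 1) (cls g .a) = emap 1 .c := by
    simp [hA, beta1, emap]
  rw [hβa] at hlc
  linarith [eq_of_sq_sub_le_sq_sub_self hlc, show emap 1 .c = 0 from sub_self 1]

theorem false_of_cls_c_eq_ac (hpa : 0 < pa) (hpb : 0 < pb) (hpc : 0 < pc) (hμ1 : μs < 1)
    (hν1 : νs < 1) (hν_lo : pc / (pa + pc) < νs) (hζ0 : 0 ≤ ζ)
    (hB : cls g .b = {.b}) (hC : cls g .c = {.a, .c})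
    (hw : μs < m .c → ζ = 0)
    (he : beta1 (pmap pa pb pc) (emap ζ) (cls g .c) < νs → m .c = 1)
    (hlc : (emap ζ .c - beta1 (pmap pa pb pc) (emap ζ) (cls g .c)) ^ 2 ≤
      (emap ζ .c - beta1 (pmap pa pb pc) (emap ζ) (cls g .b)) ^ 2) : False := by
  have hβc : beta1 (pmap pa pb pc) (emap ζ) (cls g .c) = pc * (1 - ζ) / (pa + pc) := by
    rw [hC, beta1_pair _ _ (by decide)]
    simp [pmap, emap]
  have hlt_ν : beta1 (pmap pa pb pc) (emap ζ) (cls g .c) < νs := by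
    rw [hβc]
    refine lt_of_le_of_lt (div_le_div_of_nonneg_right ?_ (by positivity)) hν_lo
    nlinarith
  obtain rfl := zeta_eq_zero_of_lt hμ1 hw he hlt_ν
  have hβb : beta1 (pmap pa pb pc) (emap 0) (cls g .b) = emap 0 .c := by
    rw [hB, beta1_singleton _ _ hpb.ne']
    simp [emap]
  rw [hβb] at hlc
  linarith [eq_of_sq_sub_le_sq_sub_self hlc, show emap 0 .c = 1 from sub_zero 1]

theorem false_of_cls_c_eq_c (hpc : 0 < pc) (hμ0 : 0 < μs) (hμ1 : μs < 1) (hν0 : 0 < νs) (hν1 : νs < 1)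
    (hν_ne : νs ≠ pb / (pa + pb))
    (hA : cls g .a = {.a, .b}) (hB : cls g .b = {.a, .b}) (hC : cls g .c = {.c})
    (hw : (m .c < μs → ζ = 1) ∧ (μs < m .c → ζ = 0))
    (he : (beta1 (pmap pa pb pc) (emap ζ) (cls g .c) < νs → m .c = 1) ∧
      (νs < beta1 (pmap pa pb pc) (emap ζ) (cls g .c) → m .c = 0))
    (hlcA : (emap ζ .a - beta1 (pmap pa pb pc) (emap ζ) (cls g .a)) ^ 2 ≤
      (emap ζ .a - beta1 (pmap pa pb pc) (emap ζ) (cls g .c)) ^ 2)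
    (hlcB : (emap ζ .b - beta1 (pmap pa pb pc) (emap ζ) (cls g .b)) ^ 2 ≤
      (emap ζ .b - beta1 (pmap pa pb pc) (emap ζ) (cls g .c)) ^ 2) : False := by
  have hβc : beta1 (pmap pa pb pc) (emap ζ) (cls g .c) = 1 - ζ := by
    rw [hC, beta1_singleton _ _ hpc.ne']
    rfl
  have hβab (ω : Typ) (hω : cls g ω = {.a, .b}) :
      beta1 (pmap pa pb pc) (emap ζ) (cls g ω) = pb / (pa + pb) := by
    rw [hω, beta1_pair _ _ (by decide)]
    simp [pmap, emap]
  have hβc_eq : 1 - ζ = νs := by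
    rw [hβc] at he
    rcases lt_trichotomy (1 - ζ) νs with h | h | h
    · have := zeta_eq_zero_of_lt hμ1 hw.2 he.1 h
      linarith
    · exact h
    · have := zeta_eq_one_of_lt hμ0 hw.1 he.2 h
      linarith
  rw [hβab _ hA, hβc, hβc_eq] at hlcA
  rw [hβab _ hB, hβc, hβc_eq] at hlcB
  exact hν_ne (eq_of_sq_le_sq_of_one_sub_sq_le hν0.le hν1.le hlcA hlcB).symm

end Partitions

theorem monitoring_no_pure_clustered_ABEE_general
    (pa pb pc : ℝ) (hpa : 0 < pa) (hpb : 0 < pb) (hpc : 0 < pc)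
    (μs νs : ℝ) (hμ0 : 0 < μs) (hμ1 : μs < 1) (hν0 : 0 < νs) (hν1 : νs < 1)
    (hν_lo : pc / (pa + pc) < νs) (hν_hi : νs < pb / (pb + pc))
    (hν_ne : νs ≠ pb / (pa + pb))
    (g : Typ → Bool) (hgt : ∃ ω, g ω = true) (hgf : ∃ ω, g ω = false)
    (m : Typ → ℝ)
    (ζ : ℝ) (hζ : ζ ∈ Set.Icc (0 : ℝ) 1)
    -- (i) worker best response
    (hw : (m Typ.c < μs → ζ = 1) ∧ (μs < m Typ.c → ζ = 0))
    -- (ii) employer best response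
    (he : ∀ ω, (beta1 (pmap pa pb pc) (emap ζ) (cls g ω) < νs → m ω = 1) ∧
               (νs < beta1 (pmap pa pb pc) (emap ζ) (cls g ω) → m ω = 0))
    -- (iii) local clustering
    (hlc : ∀ ω ω' : Typ,
      (emap ζ ω - beta1 (pmap pa pb pc) (emap ζ) (cls g ω)) ^ 2 ≤
        (emap ζ ω - beta1 (pmap pa pb pc) (emap ζ) (cls g ω')) ^ 2) :
    False := by
  rcases cls_cases g hgt hgf with ⟨hA, hC⟩ | ⟨hB, hC⟩ | ⟨hA, hB, hC⟩
  · exact false_of_cls_c_eq_bc hpb hpc hμ0 hν0 hν_hi hζ.2 hA hC hw.1 (he .c).2 (hlc .c .a)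
  · exact false_of_cls_c_eq_ac hpa hpb hpc hμ1 hν1 hν_lo hζ.1 hB hC hw.2 (he .c).1 (hlc .c .b)
  · exact false_of_cls_c_eq_c hpc hμ0 hμ1 hν0 hν1 hν_ne hA hB hC hw (he .c)
      (hlc .a .c) (hlc .b .c)

/-- **No pure clustered ABEE in the monitoring game** (Proposition 4).

Assume `p_c ≤ p_a`, `p_c ≤ p_b`, `p_c/(p_a+p_c) < ν* < p_b/(p_b+p_c)` and
`ν* ≠ p_b/(p_a+p_b)`.  Then no two-class analogy partition of `{a,b,c}` (encoded by a
labeling `g : Typ → Bool` with both fibers nonempty), employer control probabilities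
`m : Typ → [0,1]` and worker mixing `ζ ∈ [0,1]` can simultaneously satisfy the worker's
best response, the employer's best response the consistent expectations, and local
clustering of the partition with respect to the worker's behavior. -/
theorem monitoring_no_pure_clustered_ABEE
    (pa pb pc : ℝ) (hpa : 0 < pa) (hpb : 0 < pb) (hpc : 0 < pc)
    (hsum : pa + pb + pc = 1) (hca : pc ≤ pa) (hcb : pc ≤ pb)
    (μs νs : ℝ) (hμ0 : 0 < μs) (hμ1 : μs < 1) (hν0 : 0 < νs) (hν1 : νs < 1)
    (hν_lo : pc / (pa + pc) < νs) (hν_hi : νs < pb / (pb + pc))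
    (hν_ne : νs ≠ pb / (pa + pb))
    (g : Typ → Bool) (hgt : ∃ ω, g ω = true) (hgf : ∃ ω, g ω = false)
    (m : Typ → ℝ) (hm : ∀ ω, m ω ∈ Set.Icc (0 : ℝ) 1)
    (ζ : ℝ) (hζ : ζ ∈ Set.Icc (0 : ℝ) 1)
    -- (i) worker best response
    (hw : (m Typ.c < μs → ζ = 1) ∧ (μs < m Typ.c → ζ = 0))
    -- (ii) employer best response
    (he : ∀ ω, (beta1 (pmap pa pb pc) (emap ζ) (cls g ω) < νs → m ω = 1) ∧
               (νs < beta1 (pmap pa pb pc) (emap ζ) (cls g ω) → m ω = 0))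
    -- (iii) local clustering
    (hlc : ∀ ω ω' : Typ,
      (emap ζ ω - beta1 (pmap pa pb pc) (emap ζ) (cls g ω)) ^ 2 ≤
        (emap ζ ω - beta1 (pmap pa pb pc) (emap ζ) (cls g ω')) ^ 2) :
    False :=
  monitoring_no_pure_clustered_ABEE_general pa pb pc hpa hpb hpc μs νs hμ0 hμ1 hν0 hν1 hν_lo hν_hi
    hν_ne g hgt hgf m ζ hζ hw he hlc
end

section
/- In the linear best-reply environment on an interval I = [μ₀, μ_K] ⊆ [−1, 1], fix an interval analogy partition used by both players. If integrable σ₁, σ₂ : I → ℝ satisfy, for each player i = 1,2, each k = 1,…,K, and almost every μ ∈ α_k, σ_i(μ) = A + μB + μC β_i(α_k), where β_i(α_k) = ∫_{α_k} σ_j(μ) f(μ) dμ / (F(μ_k) − F(μ_{k−1})) (j ≠ i), then for every k: β₁(α_k) = β₂(α_k) = (A + B E[μ|α_k])/(1 − C E[μ|α_k]), and σ₁(μ) = σ₂(μ) = A + μ(B + AC)/(1 − C E[μ|α_k]) for almost every μ ∈ α_k. In particular, given the partition, the ABEE exists, is unique up to null sets, and is symmetric. -/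
open MeasureTheory Set

/-- Conditional mean of `μ` on the interval `(s, t]` under the density `f`. -/
noncomputable def condMu (f : ℝ → ℝ) (s t : ℝ) : ℝ :=
  (∫ x in Ioc s t, x * f x) / ∫ x in Ioc s t, f x

/-- The `k`-th class of the interval analogy partition with cut points `m`:
`α₁ = [μ₀, μ₁]` and `α_k = (μ_{k-1}, μ_k]` for `k ≥ 2`. -/
noncomputable def clSet (m : ℕ → ℝ) (k : ℕ) : Set ℝ :=
  if k = 1 then Icc (m 0) (m 1) else Ioc (m (k - 1)) (m k)

/-!
On each class the opponent's strategy is affine in `μ` with slope `B + C β`, so its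
analogy-based expectation is that affine function evaluated at the conditional mean
`e = E[μ|α_k]`: `β₁ = A + (B + C β₂) e` and `β₂ = A + (B + C β₁) e`.  Subtracting,
`(1 + C e)(β₁ - β₂) = 0`, and `|C e| < 1` because the class lies in `[-1, 1]`; hence
`β₁ = β₂`, and the common value solves `β = A + (B + C β) e`.
-/

section ConditionalMean

variable {f : ℝ → ℝ} {s t : ℝ}

lemma condMu_mem_Icc (hf : IntegrableOn f (Ioc s t))
    (hxf : IntegrableOn (fun x => x * f x) (Ioc s t)) (hf0 : ∀ x ∈ Ioc s t, 0 ≤ f x)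
    (hpos : 0 < ∫ x in Ioc s t, f x) : condMu f s t ∈ Icc s t := by
  rw [condMu, mem_Icc, le_div_iff₀ hpos, div_le_iff₀ hpos, ← integral_const_mul,
    ← integral_const_mul]
  exact ⟨setIntegral_mono_on (hf.const_mul s) hxf measurableSet_Ioc fun x hx =>
      mul_le_mul_of_nonneg_right hx.1.le (hf0 x hx),
    setIntegral_mono_on hxf (hf.const_mul t) measurableSet_Ioc fun x hx =>
      mul_le_mul_of_nonneg_right hx.2 (hf0 x hx)⟩

lemma condAvg_eq_of_ae_eq_affine {σ : ℝ → ℝ} {a b : ℝ} (hf : IntegrableOn f (Ioc s t))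
    (hxf : IntegrableOn (fun x => x * f x) (Ioc s t)) (hpos : (∫ x in Ioc s t, f x) ≠ 0)
    (hσ : ∀ᵐ x, x ∈ Ioc s t → σ x = a + b * x) :
    (∫ x in Ioc s t, σ x * f x) / (∫ x in Ioc s t, f x) = a + b * condMu f s t := by
  have hcongr : ∫ x in Ioc s t, σ x * f x = ∫ x in Ioc s t, (a * f x + b * (x * f x)) := by
    refine setIntegral_congr_ae measurableSet_Ioc ?_
    filter_upwards [hσ] with x hx hxmem
    rw [hx hxmem]
    ring
  rw [hcongr, integral_add (hf.const_mul a) (hxf.const_mul b), integral_const_mul,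
    integral_const_mul, condMu]
  field_simp

variable (hst : s < t) (hf : ContinuousOn f (Icc s t)) (hfpos : ∀ x ∈ Icc s t, 0 < f x)
include hst hf hfpos

lemma setIntegral_Ioc_pos_of_continuousOn : 0 < ∫ x in Ioc s t, f x := by
  rw [← intervalIntegral.integral_of_le hst.le]
  exact intervalIntegral.intervalIntegral_pos_of_pos_on (hf.intervalIntegrable_of_Icc hst.le)
    (fun x hx => hfpos x (Ioo_subset_Icc_self hx)) hst

lemma abs_condMu_le_one (hI : Icc s t ⊆ Icc (-1) 1) : |condMu f s t| ≤ 1 := by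
  have hmem := condMu_mem_Icc (hf.integrableOn_Icc.mono_set Ioc_subset_Icc_self)
    ((continuousOn_id.mul hf).integrableOn_Icc.mono_set Ioc_subset_Icc_self)
    (fun x hx => (hfpos x (Ioc_subset_Icc_self hx)).le)
    (setIntegral_Ioc_pos_of_continuousOn hst hf hfpos)
  exact abs_le.mpr ⟨(hI (left_mem_Icc.mpr hst.le)).1.trans hmem.1,
    hmem.2.trans (hI (right_mem_Icc.mpr hst.le)).2⟩

lemma consistent_expectation_eq {σ : ℝ → ℝ} {A B C β β' : ℝ}
    (hβ : β = (∫ x in Ioc s t, σ x * f x) / ∫ x in Ioc s t, f x)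
    (hbr : ∀ᵐ μ, μ ∈ Ioc s t → σ μ = A + μ * B + μ * C * β') :
    β = A + (B + C * β') * condMu f s t := by
  rw [hβ]
  refine condAvg_eq_of_ae_eq_affine (hf.integrableOn_Icc.mono_set Ioc_subset_Icc_self)
    ((continuousOn_id.mul hf).integrableOn_Icc.mono_set Ioc_subset_Icc_self)
    (setIntegral_Ioc_pos_of_continuousOn hst hf hfpos).ne' ?_
  filter_upwards [hbr] with μ h hμ
  rw [h hμ]
  ring

end ConditionalMean

lemma eq_div_of_mutual_affine {A B C e β₁ β₂ : ℝ} (hCe : |C * e| < 1)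
    (h₁ : β₁ = A + (B + C * β₂) * e) (h₂ : β₂ = A + (B + C * β₁) * e) :
    β₁ = (A + B * e) / (1 - C * e) ∧ β₂ = (A + B * e) / (1 - C * e) := by
  obtain ⟨hlo, hhi⟩ := abs_lt.mp hCe
  have hsymm : β₁ = β₂ := by
    have h : (1 + C * e) * (β₁ - β₂) = 0 := by linear_combination h₁ - h₂
    linarith [(mul_eq_zero.mp h).resolve_left (by linarith)]
  have hval : β₁ = (A + B * e) / (1 - C * e) := by
    rw [← hsymm] at h₂
    rw [eq_div_iff (by linarith)]
    linear_combination h₂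
  exact ⟨hval, hsymm ▸ hval⟩

lemma best_reply_to_prototype_eq {A B C e μ : ℝ} (h : 1 - C * e ≠ 0) :
    A + μ * B + μ * C * ((A + B * e) / (1 - C * e)) = A + μ * (B + A * C) / (1 - C * e) := by
  field_simp
  ring

lemma cutPoint_lt_and_Icc_subset {K : ℕ} {m : ℕ → ℝ} (hmono : ∀ k < K, m k < m (k + 1))
    {k : ℕ} (hk : 1 ≤ k) (hkK : k ≤ K) :
    m (k - 1) < m k ∧ Icc (m (k - 1)) (m k) ⊆ Icc (m 0) (m K) := by
  have hmle := (strictMonoOn_Iic_of_lt_succ hmono).monotoneOn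
  exact ⟨Nat.sub_add_cancel hk ▸ hmono (k - 1) (by omega),
    Icc_subset_Icc (hmle (Nat.zero_le K) (Nat.sub_le_of_le_add (by omega)) (Nat.zero_le _))
      (hmle hkK self_mem_Iic hkK)⟩

lemma Ioc_subset_clSet (m : ℕ → ℝ) (k : ℕ) : Ioc (m (k - 1)) (m k) ⊆ clSet m k := by
  unfold clSet
  split_ifs with hk
  · subst hk
    exact Ioc_subset_Icc_self
  · exact subset_rfl

theorem linear_ABEE_unique_symmetric_general
    (K : ℕ) (m : ℕ → ℝ)
    (hmono : ∀ k < K, m k < m (k + 1))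
    (hlo : -1 ≤ m 0) (hhi : m K ≤ 1)
    (f : ℝ → ℝ) (hf : ContinuousOn f (Icc (m 0) (m K)))
    (hfpos : ∀ x ∈ Icc (m 0) (m K), 0 < f x)
    (A B C : ℝ) (hC0 : 0 < C) (hC1 : C < 1)
    (σ₁ σ₂ : ℝ → ℝ)
    (β₁ β₂ : ℕ → ℝ)
    -- consistency of the analogy-based expectations
    (hβ₁ : ∀ k, 1 ≤ k → k ≤ K → β₁ k =
      (∫ x in Ioc (m (k - 1)) (m k), σ₂ x * f x) / ∫ x in Ioc (m (k - 1)) (m k), f x)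
    (hβ₂ : ∀ k, 1 ≤ k → k ≤ K → β₂ k =
      (∫ x in Ioc (m (k - 1)) (m k), σ₁ x * f x) / ∫ x in Ioc (m (k - 1)) (m k), f x)
    -- best responses on (almost) every game of every class
    (hbr₁ : ∀ k, 1 ≤ k → k ≤ K → ∀ᵐ μ : ℝ ∂volume, μ ∈ clSet m k →
      σ₁ μ = A + μ * B + μ * C * β₁ k)
    (hbr₂ : ∀ k, 1 ≤ k → k ≤ K → ∀ᵐ μ : ℝ ∂volume, μ ∈ clSet m k →
      σ₂ μ = A + μ * B + μ * C * β₂ k) :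
    (∀ k, 1 ≤ k → k ≤ K →
      β₁ k = (A + B * condMu f (m (k - 1)) (m k)) / (1 - C * condMu f (m (k - 1)) (m k)) ∧
      β₂ k = (A + B * condMu f (m (k - 1)) (m k)) / (1 - C * condMu f (m (k - 1)) (m k))) ∧
    (∀ k, 1 ≤ k → k ≤ K → ∀ᵐ μ : ℝ ∂volume, μ ∈ clSet m k →
      σ₁ μ = A + μ * (B + A * C) / (1 - C * condMu f (m (k - 1)) (m k)) ∧
      σ₂ μ = A + μ * (B + A * C) / (1 - C * condMu f (m (k - 1)) (m k))) := by
  have hCe : ∀ k, 1 ≤ k → k ≤ K → |C * condMu f (m (k - 1)) (m k)| < 1 := by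
    intro k hk hkK
    obtain ⟨hst, hsub⟩ := cutPoint_lt_and_Icc_subset hmono hk hkK
    rw [abs_mul, abs_of_pos hC0]
    exact mul_lt_one_of_nonneg_of_lt_one_left hC0.le hC1 <| abs_condMu_le_one hst
      (hf.mono hsub) (fun x hx => hfpos x (hsub hx)) (hsub.trans (Icc_subset_Icc hlo hhi))
  have hβ : ∀ k, 1 ≤ k → k ≤ K →
      β₁ k = (A + B * condMu f (m (k - 1)) (m k)) / (1 - C * condMu f (m (k - 1)) (m k)) ∧
      β₂ k = (A + B * condMu f (m (k - 1)) (m k)) / (1 - C * condMu f (m (k - 1)) (m k)) := by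
    intro k hk hkK
    obtain ⟨hst, hsub⟩ := cutPoint_lt_and_Icc_subset hmono hk hkK
    have hfk := hf.mono hsub
    have hfposk : ∀ x ∈ Icc (m (k - 1)) (m k), 0 < f x := fun x hx => hfpos x (hsub hx)
    exact eq_div_of_mutual_affine (hCe k hk hkK)
      (consistent_expectation_eq hst hfk hfposk (hβ₁ k hk hkK)
        ((hbr₂ k hk hkK).mono fun μ h hμ => h (Ioc_subset_clSet m k hμ)))
      (consistent_expectation_eq hst hfk hfposk (hβ₂ k hk hkK)
        ((hbr₁ k hk hkK).mono fun μ h hμ => h (Ioc_subset_clSet m k hμ)))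
  refine ⟨hβ, fun k hk hkK => ?_⟩
  have hden := (sub_pos.mpr (abs_lt.mp (hCe k hk hkK)).2).ne'
  filter_upwards [hbr₁ k hk hkK, hbr₂ k hk hkK] with μ h₁ h₂ hμ
  rw [h₁ hμ, h₂ hμ, (hβ k hk hkK).1, (hβ k hk hkK).2]
  exact ⟨best_reply_to_prototype_eq hden, best_reply_to_prototype_eq hden⟩

/-- **Uniqueness and symmetry of the ABEE in the linear best-reply environment**
(Proposition 7).

The parameter `μ` is distributed on `I = [μ₀, μ_K] ⊆ [-1, 1]` with continuous positive
density `f`; both players use the interval analogy partition with cut points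
`μ₀ < μ₁ < ⋯ < μ_K`; best responses are `A + μ B + μ C m` with `0 < C < 1`.  If the
integrable strategies `σ₁, σ₂` best respond to the consistent analogy-based expectations
`β₁, β₂`, then for every class `k`:
`β₁(α_k) = β₂(α_k) = (A + B E[μ|α_k]) / (1 - C E[μ|α_k])`, and for almost every
`μ ∈ α_k`, `σ₁ μ = σ₂ μ = A + μ (B + A C) / (1 - C E[μ|α_k])`. -/
theorem linear_ABEE_unique_symmetric
    (K : ℕ) (hK : 1 ≤ K) (m : ℕ → ℝ)
    (hmono : ∀ k < K, m k < m (k + 1))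
    (hlo : -1 ≤ m 0) (hhi : m K ≤ 1)
    (f : ℝ → ℝ) (hf : ContinuousOn f (Icc (m 0) (m K)))
    (hfpos : ∀ x ∈ Icc (m 0) (m K), 0 < f x)
    (A B C : ℝ) (hC0 : 0 < C) (hC1 : C < 1)
    (σ₁ σ₂ : ℝ → ℝ)
    (hint₁ : IntegrableOn (fun x => σ₁ x * f x) (Icc (m 0) (m K)))
    (hint₂ : IntegrableOn (fun x => σ₂ x * f x) (Icc (m 0) (m K)))
    (β₁ β₂ : ℕ → ℝ)
    -- consistency of the analogy-based expectations
    (hβ₁ : ∀ k, 1 ≤ k → k ≤ K → β₁ k =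
      (∫ x in Ioc (m (k - 1)) (m k), σ₂ x * f x) / ∫ x in Ioc (m (k - 1)) (m k), f x)
    (hβ₂ : ∀ k, 1 ≤ k → k ≤ K → β₂ k =
      (∫ x in Ioc (m (k - 1)) (m k), σ₁ x * f x) / ∫ x in Ioc (m (k - 1)) (m k), f x)
    -- best responses on (almost) every game of every class
    (hbr₁ : ∀ k, 1 ≤ k → k ≤ K → ∀ᵐ μ : ℝ ∂volume, μ ∈ clSet m k →
      σ₁ μ = A + μ * B + μ * C * β₁ k)
    (hbr₂ : ∀ k, 1 ≤ k → k ≤ K → ∀ᵐ μ : ℝ ∂volume, μ ∈ clSet m k →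
      σ₂ μ = A + μ * B + μ * C * β₂ k) :
    (∀ k, 1 ≤ k → k ≤ K →
      β₁ k = (A + B * condMu f (m (k - 1)) (m k)) / (1 - C * condMu f (m (k - 1)) (m k)) ∧
      β₂ k = (A + B * condMu f (m (k - 1)) (m k)) / (1 - C * condMu f (m (k - 1)) (m k))) ∧
    (∀ k, 1 ≤ k → k ≤ K → ∀ᵐ μ : ℝ ∂volume, μ ∈ clSet m k →
      σ₁ μ = A + μ * (B + A * C) / (1 - C * condMu f (m (k - 1)) (m k)) ∧
      σ₂ μ = A + μ * (B + A * C) / (1 - C * condMu f (m (k - 1)) (m k))) :=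
  linear_ABEE_unique_symmetric_general K m hmono hlo hhi f hf hfpos A B C hC0 hC1 σ₁ σ₂ β₁ β₂ hβ₁
    hβ₂ hbr₁ hbr₂
end

section
/- In the linear best-reply environment on I = [0,1] (strategic complements), let 0 = μ*₀ < μ*₁ < ⋯ < μ*_K = 1 be an equidistant-expectations sequence, i.e. μ*_k = (E[μ|(μ*_{k−1}, μ*_k]] + E[μ|(μ*_k, μ*_{k+1}]])/2 for every k = 1,…,K−1. Then there exist reals μ̲_k < μ*_k < μ̄_k (k = 1,…,K−1) such that for every sequence 0 = μ₀ < μ₁ < ⋯ < μ_K = 1 with μ_k ∈ (μ̲_k, μ̄_k) for all k = 1,…,K−1, the interval analogy partition (α_k)_{k=1}^K it defines is locally clustered with respect to the induced ABEE; that is, the partition together with the corresponding ABEE is a locally clustered analogy-based expectation equilibrium. -/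
open MeasureTheory Set

/-- The ABEE prototype (analogy-based expectation) of class `α_k`. -/
noncomputable def betak (f : ℝ → ℝ) (A B C : ℝ) (m : ℕ → ℝ) (k : ℕ) : ℝ :=
  (A + B * condMu f (m (k - 1)) (m k)) / (1 - C * condMu f (m (k - 1)) (m k))

/-- The ABEE action in game `μ` of class `α_k`. -/
noncomputable def abeek (f : ℝ → ℝ) (A B C : ℝ) (m : ℕ → ℝ) (k : ℕ) (μ : ℝ) : ℝ :=
  A + μ * (B + A * C) / (1 - C * condMu f (m (k - 1)) (m k))

/-!
With `d_k = 1 - C E[μ|α_k]`, the ABEE action `a(μ|α_k)` and every prototype `β(α_j)` are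
`A + (B + A C)` times a rescaled coordinate, `μ / d_k` and `Y_j = E[μ|α_j] / d_j` respectively.
As `Y` is increasing in `j`, local clustering follows once each cut `μ_k`, read in the coordinate
of either adjacent class, lies on that class's side of the midpoint `(Y_k + Y_{k+1}) / 2`.
At an equidistant cut both inequalities are strict, with gaps
`C E_{k+1} (E_{k+1} - E_k) / (2 d_k d_{k+1})` and `C E_k (E_{k+1} - E_k) / (2 d_k d_{k+1})`,
and the conditional means depend continuously on the cuts, so they survive small perturbations.
-/

open Filter Topology Metric

lemma setIntegral_Ioc_pos {g : ℝ → ℝ} {s t : ℝ} (hst : s < t) (hg : ContinuousOn g (Icc s t))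
    (hpos : ∀ x ∈ Ioo s t, 0 < g x) : 0 < ∫ x in Ioc s t, g x := by
  rw [← intervalIntegral.integral_of_le hst.le]
  exact intervalIntegral.intervalIntegral_pos_of_pos_on
    ((hg.mono (uIcc_of_le hst.le).subset).intervalIntegrable) hpos hst

lemma condMu_mem_Ioo {f : ℝ → ℝ} {s t : ℝ} (hst : s < t) (hf : ContinuousOn f (Icc s t))
    (hpos : ∀ x ∈ Ioo s t, 0 < f x) : condMu f s t ∈ Ioo s t := by
  have hmass := setIntegral_Ioc_pos hst hf hpos
  have hint : IntegrableOn f (Ioc s t) := hf.integrableOn_Icc.mono_set Ioc_subset_Icc_self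
  have hxint : IntegrableOn (fun x => x * f x) (Ioc s t) :=
    (continuousOn_id.mul hf).integrableOn_Icc.mono_set Ioc_subset_Icc_self
  have hlo : 0 < ∫ x in Ioc s t, (x - s) * f x :=
    setIntegral_Ioc_pos hst (by fun_prop) fun x hx => mul_pos (sub_pos.2 hx.1) (hpos x hx)
  have hhi : 0 < ∫ x in Ioc s t, (t - x) * f x :=
    setIntegral_Ioc_pos hst (by fun_prop) fun x hx => mul_pos (sub_pos.2 hx.2) (hpos x hx)
  simp only [sub_mul] at hlo hhi
  rw [integral_sub hxint (hint.const_mul s), integral_const_mul] at hlo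
  rw [integral_sub (hint.const_mul t) hxint, integral_const_mul] at hhi
  rw [condMu, mem_Ioo, lt_div_iff₀ hmass, div_lt_iff₀ hmass]
  constructor <;> linarith

lemma condMu_congr {f g : ℝ → ℝ} {s t : ℝ} (h : EqOn f g (Ioc s t)) :
    condMu f s t = condMu g s t := by
  rw [condMu, condMu, setIntegral_congr_fun measurableSet_Ioc h,
    setIntegral_congr_fun measurableSet_Ioc fun x hx => congrArg (x * ·) (h hx)]

lemma continuous_setIntegral_Ioc {g : ℝ → ℝ} (hg : Continuous g) :
    Continuous fun z : ℝ × ℝ => ∫ x in Ioc z.1 z.2, g x := by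
  have hprim :=
    intervalIntegral.continuous_primitive (μ := volume) (fun a b => hg.intervalIntegrable a b) 0
  have key : ∀ s t : ℝ, ∫ x in Ioc s t, g x = (∫ x in 0..max s t, g x) - ∫ x in 0..s, g x := by
    intro s t
    have hI : Ioc s t = Ioc s (max s t) := by
      ext x
      simp only [mem_Ioc, le_max_iff]
      exact ⟨fun h => ⟨h.1, Or.inr h.2⟩, fun h => ⟨h.1, h.2.resolve_left h.1.not_ge⟩⟩
    rw [intervalIntegral.integral_interval_sub_left (hg.intervalIntegrable _ _)
      (hg.intervalIntegrable _ _), intervalIntegral.integral_of_le (le_max_left s t), hI]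
  simp_rw [key]
  fun_prop

lemma continuousAt_condMu {g : ℝ → ℝ} (hg : Continuous g) {p q : ℝ}
    (hmass : ∫ x in Ioc p q, g x ≠ 0) : ContinuousAt (fun z : ℝ × ℝ => condMu g z.1 z.2) (p, q) :=
  ((continuous_setIntegral_Ioc (by fun_prop)).continuousAt.div
    (continuous_setIntegral_Ioc hg).continuousAt hmass)

lemma Metric.exists_pos_forall_ball_subset {ι X : Type*} [PseudoMetricSpace X] (s : Finset ι)
    {x : ι → X} {u : ι → Set X} (hu : ∀ i ∈ s, u i ∈ 𝓝 (x i)) :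
    ∃ δ > 0, ∀ i ∈ s, ball (x i) δ ⊆ u i := by
  have hsmall : ∀ᶠ δ in 𝓝 (0 : ℝ), ∀ i ∈ s, ball (x i) δ ⊆ u i :=
    s.eventually_all.2 fun i hi => eventually_ball_subset (hu i hi)
  obtain ⟨δ, hδ, hpos⟩ :=
    ((hsmall.filter_mono nhdsWithin_le_nhds).and (self_mem_nhdsWithin (s := Ioi 0))).exists
  exact ⟨δ, hpos, hδ⟩

noncomputable def abeeScale (C e x : ℝ) : ℝ := x / (1 - C * e)

lemma abeeScale_self_le_abeeScale_self {C e₁ e₂ : ℝ} (h₁ : 0 < 1 - C * e₁) (h₂ : 0 < 1 - C * e₂)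
    (h : e₁ ≤ e₂) : abeeScale C e₁ e₁ ≤ abeeScale C e₂ e₂ := by
  rw [abeeScale, abeeScale, div_le_div_iff₀ h₁ h₂]
  linarith

/-- In the rescaled coordinate of either adjacent class, the cut `b` lies on that class's side of
the midpoint of the two prototypes; this is local clustering at the cut. -/
def IsSeparatingCut (f : ℝ → ℝ) (C a b c : ℝ) : Prop :=
  abeeScale C (condMu f a b) b ≤
      (abeeScale C (condMu f a b) (condMu f a b) + abeeScale C (condMu f b c) (condMu f b c)) / 2 ∧
    (abeeScale C (condMu f a b) (condMu f a b) + abeeScale C (condMu f b c) (condMu f b c)) / 2 ≤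
      abeeScale C (condMu f b c) b

lemma abeeScale_midpoint_lt {C e₁ e₂ : ℝ} (hC : 0 < C) (h₁ : 0 < e₁) (h : e₁ < e₂)
    (h₂ : C * e₂ < 1) :
    abeeScale C e₁ ((e₁ + e₂) / 2) < (abeeScale C e₁ e₁ + abeeScale C e₂ e₂) / 2 ∧
      (abeeScale C e₁ e₁ + abeeScale C e₂ e₂) / 2 < abeeScale C e₂ ((e₁ + e₂) / 2) := by
  have hd₂ : 0 < 1 - C * e₂ := by linarith
  have hd₁ : 0 < 1 - C * e₁ := by nlinarith
  simp only [abeeScale]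
  rw [div_add_div _ _ hd₁.ne' hd₂.ne', div_div, div_div,
    div_lt_div_iff₀ (by positivity) (by positivity),
    div_lt_div_iff₀ (by positivity) (by positivity)]
  constructor
  · nlinarith [mul_pos (mul_pos hd₁ (h₁.trans h)) (mul_pos hC (sub_pos.2 h))]
  · nlinarith [mul_pos (mul_pos hd₂ h₁) (mul_pos hC (sub_pos.2 h))]

lemma ContinuousAt.abeeScale {X : Type*} [TopologicalSpace X] {C : ℝ} {e x : X → ℝ} {z : X}
    (he : ContinuousAt e z) (hx : ContinuousAt x z) (hd : 1 - C * e z ≠ 0) :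
    ContinuousAt (fun y => abeeScale C (e y) (x y)) z :=
  hx.div (continuousAt_const.sub (continuousAt_const.mul he)) hd

/-- At an equidistant cut the separation is strict, so it persists nearby. -/
lemma eventually_isSeparatingCut {g : ℝ → ℝ} (hg : Continuous g) {C p q r : ℝ}
    (hpos : ∀ x ∈ Ioo p r, 0 < g x) (hC : 0 < C) (hCr : C * r ≤ 1) (hp : 0 ≤ p) (hpq : p < q)
    (hqr : q < r) (hequi : q = (condMu g p q + condMu g q r) / 2) :
    ∀ᶠ z : ℝ × ℝ × ℝ in 𝓝 (p, q, r), IsSeparatingCut g C z.1 z.2.1 z.2.2 := by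
  have hpos₁ : ∀ x ∈ Ioo p q, 0 < g x := fun x hx => hpos x ⟨hx.1, hx.2.trans hqr⟩
  have hpos₂ : ∀ x ∈ Ioo q r, 0 < g x := fun x hx => hpos x ⟨hpq.trans hx.1, hx.2⟩
  obtain ⟨he₁p, he₁q⟩ := condMu_mem_Ioo hpq hg.continuousOn hpos₁
  obtain ⟨he₂q, he₂r⟩ := condMu_mem_Ioo hqr hg.continuousOn hpos₂
  have hE₁ : ContinuousAt (fun z : ℝ × ℝ × ℝ => condMu g z.1 z.2.1) (p, q, r) :=
    (continuousAt_condMu hg (setIntegral_Ioc_pos hpq hg.continuousOn hpos₁).ne').comp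
      (x := (p, q, r)) (f := fun z : ℝ × ℝ × ℝ => (z.1, z.2.1)) (by fun_prop)
  have hE₂ : ContinuousAt (fun z : ℝ × ℝ × ℝ => condMu g z.2.1 z.2.2) (p, q, r) :=
    (continuousAt_condMu hg (setIntegral_Ioc_pos hqr hg.continuousOn hpos₂).ne').comp
      (x := (p, q, r)) (f := fun z : ℝ × ℝ × ℝ => (z.2.1, z.2.2)) (by fun_prop)
  have hCe₂ : C * condMu g q r < 1 := by nlinarith
  have hd₁ : 1 - C * condMu g p q ≠ 0 := by nlinarith
  have hd₂ : 1 - C * condMu g q r ≠ 0 := by linarith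
  have hsep := abeeScale_midpoint_lt hC (hp.trans_lt he₁p) (he₁q.trans he₂q) hCe₂
  rw [← hequi] at hsep
  have hmid := ((hE₁.abeeScale hE₁ hd₁).add (hE₂.abeeScale hE₂ hd₂)).div_const 2
  filter_upwards [(hE₁.abeeScale continuous_snd.fst.continuousAt hd₁).eventually_lt hmid hsep.1,
    hmid.eventually_lt (hE₂.abeeScale continuous_snd.fst.continuousAt hd₂) hsep.2] with z h₁ h₂
  exact ⟨h₁.le, h₂.le⟩

lemma eventually_isSeparatingCut_of_continuousOn {f : ℝ → ℝ} (hf : ContinuousOn f (Icc 0 1))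
    (hfpos : ∀ x ∈ Icc (0 : ℝ) 1, 0 < f x) {C p q r : ℝ} (hC : 0 < C) (hC1 : C ≤ 1)
    (hp : 0 ≤ p) (hpq : p < q) (hqr : q < r) (hr : r ≤ 1)
    (hequi : q = (condMu f p q + condMu f q r) / 2) :
    ∀ᶠ z : ℝ × ℝ × ℝ in 𝓝 (p, q, r),
      0 ≤ z.1 → z.2.2 ≤ 1 → IsSeparatingCut f C z.1 z.2.1 z.2.2 := by
  set g : ℝ → ℝ := fun x => f (projIcc 0 1 zero_le_one x)
  have hg : Continuous g := hf.comp_continuous (continuous_subtype_val.comp continuous_projIcc)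
    fun x => (projIcc 0 1 zero_le_one x).2
  have hfg : EqOn f g (Icc 0 1) := fun x hx => by simp [g, projIcc_of_mem _ hx]
  have hfg_Ioc : ∀ {s t : ℝ}, 0 ≤ s → t ≤ 1 → EqOn f g (Ioc s t) := fun hs ht =>
    hfg.mono (Ioc_subset_Icc_self.trans (Icc_subset_Icc hs ht))
  have hgpos : ∀ x ∈ Ioo p r, 0 < g x := fun x hx => by
    have hx' : x ∈ Icc (0 : ℝ) 1 := ⟨hp.trans hx.1.le, hx.2.le.trans hr⟩
    rw [← hfg hx']
    exact hfpos x hx'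
  rw [condMu_congr (hfg_Ioc hp (hqr.le.trans hr)), condMu_congr (hfg_Ioc (hp.trans hpq.le) hr)]
    at hequi
  have hmid : Ioo 0 1 ∈ 𝓝 q := Ioo_mem_nhds (hp.trans_lt hpq) (hqr.trans_le hr)
  filter_upwards [eventually_isSeparatingCut hg hgpos hC
    (mul_le_one₀ hC1 (hp.trans (hpq.trans hqr).le) hr) hp hpq hqr hequi,
    continuous_snd.fst.continuousAt.preimage_mem_nhds hmid] with z hz hb ha hc
  rw [IsSeparatingCut, condMu_congr (hfg_Ioc ha hb.2.le), condMu_congr (hfg_Ioc hb.1.le hc)]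
  exact hz

lemma sq_sub_le_sq_sub_of_midpoint_bounds {K k k' : ℕ} {Y : ℕ → ℝ} {x : ℝ}
    (hY : MonotoneOn Y (Icc 1 K)) (hk : k ∈ Icc 1 K) (hk' : k' ∈ Icc 1 K)
    (hlo : 1 < k → (Y (k - 1) + Y k) / 2 ≤ x) (hhi : k < K → x ≤ (Y k + Y (k + 1)) / 2) :
    (x - Y k) ^ 2 ≤ (x - Y k') ^ 2 := by
  obtain ⟨hk1, hkK⟩ := hk
  obtain ⟨hk'1, hk'K⟩ := hk'
  rcases lt_trichotomy k k' with h | rfl | h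
  · have h₁ : Y k ≤ Y (k + 1) := hY ⟨hk1, hkK⟩ ⟨by omega, by omega⟩ (by omega)
    have h₂ : Y (k + 1) ≤ Y k' := hY ⟨by omega, by omega⟩ ⟨hk'1, hk'K⟩ h
    nlinarith [hhi (by omega)]
  · exact le_rfl
  · have h₁ : Y (k - 1) ≤ Y k := hY ⟨by omega, by omega⟩ ⟨hk1, hkK⟩ (by omega)
    have h₂ : Y k' ≤ Y (k - 1) := hY ⟨hk'1, hk'K⟩ ⟨by omega, by omega⟩ (by omega)
    nlinarith [hlo (by omega)]

noncomputable def classMean (f : ℝ → ℝ) (m : ℕ → ℝ) (k : ℕ) : ℝ := condMu f (m (k - 1)) (m k)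

lemma abeek_eq_abeeScale (f : ℝ → ℝ) (A B C : ℝ) (m : ℕ → ℝ) (k : ℕ) (μ : ℝ) :
    abeek f A B C m k μ = A + (B + A * C) * abeeScale C (classMean f m k) μ := by
  rw [abeek, abeeScale, classMean]
  ring

lemma betak_eq_abeeScale {f : ℝ → ℝ} {A B C : ℝ} {m : ℕ → ℝ} {k : ℕ}
    (hd : 1 - C * classMean f m k ≠ 0) :
    betak f A B C m k = A + (B + A * C) * abeeScale C (classMean f m k) (classMean f m k) := by
  rw [classMean] at hd
  rw [betak, abeeScale, classMean, ← mul_div_assoc, add_div' _ _ _ hd]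
  ring

lemma mem_Icc_of_lt_succ {m : ℕ → ℝ} {K : ℕ} (hm : ∀ k < K, m k < m (k + 1)) {i : ℕ}
    (hi : i ≤ K) : m i ∈ Icc (m 0) (m K) :=
  ⟨(strictMonoOn_Iic_of_lt_succ hm).monotoneOn (Nat.zero_le K) hi (Nat.zero_le i),
    (strictMonoOn_Iic_of_lt_succ hm).monotoneOn hi (mem_Iic.2 le_rfl) hi⟩

lemma dist_lt_of_mem_Ioo_of_eq {m m' : ℕ → ℝ} {K : ℕ} {δ : ℝ} (hδ : 0 < δ) (h0 : m 0 = m' 0)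
    (hK : m K = m' K) (h : ∀ k, 1 ≤ k → k < K → m' k - δ < m k ∧ m k < m' k + δ) :
    ∀ i ≤ K, dist (m i) (m' i) < δ := by
  intro i hi
  rcases Nat.eq_zero_or_pos i with rfl | hi0
  · simpa [h0] using hδ
  rcases hi.eq_or_lt with rfl | hiK
  · simpa [hK] using hδ
  rw [Real.dist_eq, abs_sub_lt_iff]
  constructor <;> linarith [h i hi0 hiK]

def IsLocallyClustered (f : ℝ → ℝ) (A B C : ℝ) (K : ℕ) (m : ℕ → ℝ) : Prop :=
  ∀ k k', 1 ≤ k → k ≤ K → 1 ≤ k' → k' ≤ K → ∀ μ ∈ clSet m k,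
    (abeek f A B C m k μ - betak f A B C m k) ^ 2 ≤
      (abeek f A B C m k μ - betak f A B C m k') ^ 2

lemma mem_clSet {m : ℕ → ℝ} {k : ℕ} {μ : ℝ} (h : μ ∈ clSet m k) : m (k - 1) ≤ μ ∧ μ ≤ m k := by
  unfold clSet at h
  split_ifs at h with hk
  · subst hk; exact h
  · exact ⟨h.1.le, h.2⟩

theorem isLocallyClustered_of_isSeparatingCut {f : ℝ → ℝ} (hf : ContinuousOn f (Icc 0 1))
    (hfpos : ∀ x ∈ Icc (0 : ℝ) 1, 0 < f x) {A B C : ℝ} (hC1 : C < 1) {K : ℕ}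
    {m : ℕ → ℝ} (hm0 : m 0 = 0) (hmK : m K = 1) (hm : ∀ k < K, m k < m (k + 1))
    (hcut : ∀ j, 1 ≤ j → j < K → IsSeparatingCut f C (m (j - 1)) (m j) (m (j + 1))) :
    IsLocallyClustered f A B C K m := by
  have hm01 : ∀ i ≤ K, m i ∈ Icc 0 1 := fun i hi => hm0 ▸ hmK ▸ mem_Icc_of_lt_succ hm hi
  have hE : ∀ k, 1 ≤ k → k ≤ K → classMean f m k ∈ Ioo (m (k - 1)) (m k) := fun k h1 h2 =>
    condMu_mem_Ioo (Nat.sub_add_cancel h1 ▸ hm (k - 1) (by omega))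
      (hf.mono (Icc_subset_Icc (hm01 (k - 1) (by omega)).1 (hm01 k h2).2))
      fun x hx => hfpos x ⟨(hm01 (k - 1) (by omega)).1.trans hx.1.le, hx.2.le.trans (hm01 k h2).2⟩
  have hd : ∀ k, 1 ≤ k → k ≤ K → 0 < 1 - C * classMean f m k := fun k h1 h2 => by
    have hE0 : 0 < classMean f m k := (hm01 (k - 1) (by omega)).1.trans_lt (hE k h1 h2).1
    have hE1 : classMean f m k < 1 := (hE k h1 h2).2.trans_le (hm01 k h2).2
    nlinarith [mul_pos hE0 (sub_pos.2 hC1)]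
  set Y : ℕ → ℝ := fun k => abeeScale C (classMean f m k) (classMean f m k)
  have hY : MonotoneOn Y (Icc 1 K) := monotoneOn_of_le_succ ordConnected_Icc
    fun k _ hk hk' => abeeScale_self_le_abeeScale_self (hd k hk.1 hk.2) (hd (k + 1) hk'.1 hk'.2)
      ((hE k hk.1 hk.2).2.trans (hE (k + 1) hk'.1 hk'.2).1).le
  intro k k' hk1 hkK hk'1 hk'K μ hμ
  have hdk := hd k hk1 hkK
  rw [abeek_eq_abeeScale, betak_eq_abeeScale hdk.ne', betak_eq_abeeScale (hd k' hk'1 hk'K).ne',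
    add_sub_add_left_eq_sub, add_sub_add_left_eq_sub, ← mul_sub, ← mul_sub, mul_pow, mul_pow]
  refine mul_le_mul_of_nonneg_left ?_ (sq_nonneg _)
  refine sq_sub_le_sq_sub_of_midpoint_bounds hY ⟨hk1, hkK⟩ ⟨hk'1, hk'K⟩ (fun hk => ?_) fun hk => ?_
  · have hsep := (hcut (k - 1) (by omega) (by omega)).2
    rw [Nat.sub_add_cancel hk1] at hsep
    exact hsep.trans (div_le_div_of_nonneg_right (mem_clSet hμ).1 hdk.le)
  · exact (div_le_div_of_nonneg_right (mem_clSet hμ).2 hdk.le).trans (hcut k hk1 hk).1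

theorem complements_equidistant_locally_clustered_general
    (K : ℕ)
    (f : ℝ → ℝ) (hf : ContinuousOn f (Icc 0 1))
    (hfpos : ∀ x ∈ Icc (0 : ℝ) 1, 0 < f x)
    (A B C : ℝ) (hC0 : 0 < C) (hC1 : C < 1)
    (μe : ℕ → ℝ) (hμe0 : μe 0 = 0) (hμeK : μe K = 1)
    (hμemono : ∀ k < K, μe k < μe (k + 1))
    (hequi : ∀ k, 1 ≤ k → k < K →
      μe k = (condMu f (μe (k - 1)) (μe k) + condMu f (μe k) (μe (k + 1))) / 2) :
    ∃ lo hi : ℕ → ℝ,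
      (∀ k, 1 ≤ k → k < K → lo k < μe k ∧ μe k < hi k) ∧
      ∀ m : ℕ → ℝ, m 0 = 0 → m K = 1 → (∀ k < K, m k < m (k + 1)) →
        (∀ k, 1 ≤ k → k < K → lo k < m k ∧ m k < hi k) →
        ∀ k k', 1 ≤ k → k ≤ K → 1 ≤ k' → k' ≤ K → ∀ μ ∈ clSet m k,
          (abeek f A B C m k μ - betak f A B C m k) ^ 2 ≤
            (abeek f A B C m k μ - betak f A B C m k') ^ 2 := by
  have hμe01 : ∀ i ≤ K, μe i ∈ Icc 0 1 := fun i hi => hμe0 ▸ hμeK ▸ mem_Icc_of_lt_succ hμemono hi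
  obtain ⟨δ, hδ, hball⟩ := exists_pos_forall_ball_subset (Finset.Ioo 0 K)
    (x := fun j => (μe (j - 1), μe j, μe (j + 1)))
    (u := fun _ => {z | 0 ≤ z.1 → z.2.2 ≤ 1 → IsSeparatingCut f C z.1 z.2.1 z.2.2})
    fun j hj => by
      obtain ⟨h1, h2⟩ := Finset.mem_Ioo.1 hj
      exact eventually_isSeparatingCut_of_continuousOn hf hfpos hC0 hC1.le
        (hμe01 (j - 1) (by omega)).1 (Nat.sub_add_cancel h1 ▸ hμemono (j - 1) (by omega))
        (hμemono j h2) (hμe01 (j + 1) h2).2 (hequi j h1 h2)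
  refine ⟨fun k => μe k - δ, fun k => μe k + δ, fun k _ _ => ⟨by linarith, by linarith⟩, ?_⟩
  intro m hm0 hmK hm hlohi
  have hclose := dist_lt_of_mem_Ioo_of_eq hδ (hm0.trans hμe0.symm) (hmK.trans hμeK.symm) hlohi
  have hm01 : ∀ i ≤ K, m i ∈ Icc 0 1 := fun i hi => hm0 ▸ hmK ▸ mem_Icc_of_lt_succ hm hi
  refine isLocallyClustered_of_isSeparatingCut hf hfpos hC1 hm0 hmK hm fun j h1 h2 => ?_
  have hmem : (m (j - 1), m j, m (j + 1)) ∈ ball (μe (j - 1), μe j, μe (j + 1)) δ := by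
    simp only [mem_ball, Prod.dist_eq, max_lt_iff]
    exact ⟨hclose _ (by omega), hclose _ (by omega), hclose _ (by omega)⟩
  exact hball j (Finset.mem_Ioo.2 ⟨h1, h2⟩) hmem (hm01 (j - 1) (by omega)).1 (hm01 (j + 1) h2).2

/-- **Strategic complements: self-attractive analogy partitions around any
equidistant-expectations partition** (Proposition 8).

The parameter `μ` is distributed on `[0, 1]` with continuous positive density `f`; best
responses are `A + μ B + μ C m` with `0 < C < 1`.  Given an equidistant-expectations
sequence `0 = μ*₀ < μ*₁ < ⋯ < μ*_K = 1`, there are open intervals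
`(μ̲_k, μ̄_k) ∋ μ*_k` such that every cut sequence `0 = μ₀ < μ₁ < ⋯ < μ_K = 1` with
`μ_k ∈ (μ̲_k, μ̄_k)` for `k = 1, …, K-1` defines an interval analogy partition that is
locally clustered with respect to the induced ABEE; i.e. the partition together with the
corresponding ABEE is a locally clustered ABEE. -/
theorem complements_equidistant_locally_clustered
    (K : ℕ) (hK : 1 ≤ K)
    (f : ℝ → ℝ) (hf : ContinuousOn f (Icc 0 1))
    (hfpos : ∀ x ∈ Icc (0 : ℝ) 1, 0 < f x)
    (A B C : ℝ) (hC0 : 0 < C) (hC1 : C < 1)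
    (μe : ℕ → ℝ) (hμe0 : μe 0 = 0) (hμeK : μe K = 1)
    (hμemono : ∀ k < K, μe k < μe (k + 1))
    (hequi : ∀ k, 1 ≤ k → k < K →
      μe k = (condMu f (μe (k - 1)) (μe k) + condMu f (μe k) (μe (k + 1))) / 2) :
    ∃ lo hi : ℕ → ℝ,
      (∀ k, 1 ≤ k → k < K → lo k < μe k ∧ μe k < hi k) ∧
      ∀ m : ℕ → ℝ, m 0 = 0 → m K = 1 → (∀ k < K, m k < m (k + 1)) →
        (∀ k, 1 ≤ k → k < K → lo k < m k ∧ m k < hi k) →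
        ∀ k k', 1 ≤ k → k ≤ K → 1 ≤ k' → k' ≤ K → ∀ μ ∈ clSet m k,
          (abeek f A B C m k μ - betak f A B C m k) ^ 2 ≤
            (abeek f A B C m k μ - betak f A B C m k') ^ 2 :=
  complements_equidistant_locally_clustered_general K f hf hfpos A B C hC0 hC1 μe hμe0 hμeK hμemono
    hequi
end

section
/- In the linear best-reply environment on I = [−1, 0] (strategic substitutes), assume B ≠ −AC. Then for every K ≥ 2, no symmetric interval analogy partition −1 = μ₀ < μ₁ < ⋯ < μ_K = 0 is locally clustered with respect to the induced ABEE: there exist indices k, k' and a parameter μ ∈ α_k such that (a(μ|α_k) − β(α_k))² > (a(μ|α_k) − β(α_{k'}))². -/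
open MeasureTheory Set

lemma condMu_bounds (f : ℝ → ℝ) (hf : ContinuousOn f (Icc (-1) 0))
    (hfpos : ∀ x ∈ Icc (-1 : ℝ) 0, 0 < f x)
    (s t : ℝ) (hs : -1 ≤ s) (hst : s < t) (ht : t ≤ 0) :
    s < condMu f s t ∧ condMu f s t ≤ t := by
  have hsub : Icc s t ⊆ Icc (-1 : ℝ) 0 := Icc_subset_Icc hs ht
  have huIcc : uIcc s t = Icc s t := uIcc_of_le hst.le
  have hfc : ContinuousOn f (Icc s t) := hf.mono hsub
  have hint_f : IntervalIntegrable f volume s t := by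
    apply ContinuousOn.intervalIntegrable; rwa [huIcc]
  have hint_xf : IntervalIntegrable (fun x => x * f x) volume s t := by
    apply ContinuousOn.intervalIntegrable; rw [huIcc]
    exact continuousOn_id.mul hfc
  have hIf : (0 : ℝ) < ∫ x in Ioc s t, f x := by
    rw [← intervalIntegral.integral_of_le hst.le]
    exact intervalIntegral.intervalIntegral_pos_of_pos_on hint_f
      (fun x hx => hfpos x (hsub (Ioo_subset_Icc_self hx))) hst
  have hsplit : ∫ x in Ioc s t, (x - s) * f x
      = (∫ x in Ioc s t, x * f x) - s * ∫ x in Ioc s t, f x := by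
    have h1 : ∀ x, (x - s) * f x = x * f x - s * f x := fun x => by ring
    simp_rw [h1]
    rw [MeasureTheory.integral_sub hint_xf.1 (hint_f.1.const_mul s),
      MeasureTheory.integral_const_mul]
  constructor
  · rw [condMu, lt_div_iff₀ hIf]
    have hpos : (0 : ℝ) < ∫ x in Ioc s t, (x - s) * f x := by
      rw [← intervalIntegral.integral_of_le hst.le]
      apply intervalIntegral.intervalIntegral_pos_of_pos_on
      · apply ContinuousOn.intervalIntegrable; rw [huIcc]
        exact (continuousOn_id.sub continuousOn_const).mul hfc
      · intro x hx
        exact mul_pos (by linarith [hx.1]) (hfpos x (hsub (Ioo_subset_Icc_self hx)))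
      · exact hst
    linarith [hsplit ▸ hpos]
  · rw [condMu, div_le_iff₀ hIf]
    have hnn : (0 : ℝ) ≤ ∫ x in Ioc s t, (t - x) * f x := by
      apply MeasureTheory.setIntegral_nonneg measurableSet_Ioc
      intro x hx
      exact mul_nonneg (by linarith [hx.2]) (hfpos x (hsub (Ioc_subset_Icc_self hx))).le
    have hsplit2 : ∫ x in Ioc s t, (t - x) * f x
        = t * (∫ x in Ioc s t, f x) - ∫ x in Ioc s t, x * f x := by
      have h1 : ∀ x, (t - x) * f x = t * f x - x * f x := fun x => by ring
      simp_rw [h1]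
      rw [MeasureTheory.integral_sub (hint_f.1.const_mul t) hint_xf.1,
        MeasureTheory.integral_const_mul]
    linarith [hsplit2 ▸ hnn]

set_option maxHeartbeats 2000000 in
/-- **Strategic substitutes: self-repelling analogy partitions** (Proposition 9).

The parameter `μ` is distributed on `[-1, 0]` with continuous positive density `f`; best
responses are `A + μ B + μ C m` with `0 < C < 1` and `B ≠ -A C`.  Then for every `K ≥ 2`,
no symmetric interval analogy partition `-1 = μ₀ < μ₁ < ⋯ < μ_K = 0` is locally
clustered with respect to the induced ABEE: there are classes `k, k'` and a game
`μ ∈ α_k` whose ABEE action is strictly closer to the prototype of class `k'` than to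
the prototype of its own class `k`. -/
theorem substitutes_no_locally_clustered_partition
    (K : ℕ) (hK : 2 ≤ K)
    (f : ℝ → ℝ) (hf : ContinuousOn f (Icc (-1) 0))
    (hfpos : ∀ x ∈ Icc (-1 : ℝ) 0, 0 < f x)
    (A B C : ℝ) (hC0 : 0 < C) (hC1 : C < 1) (hB : B ≠ -A * C)
    (m : ℕ → ℝ) (hm0 : m 0 = -1) (hmK : m K = 0)
    (hmono : ∀ k < K, m k < m (k + 1)) :
    ∃ k k', 1 ≤ k ∧ k ≤ K ∧ 1 ≤ k' ∧ k' ≤ K ∧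
      ∃ μ ∈ clSet m k,
        (abeek f A B C m k μ - betak f A B C m k') ^ 2 <
          (abeek f A B C m k μ - betak f A B C m k) ^ 2 := by
  by_contra hcon
  push_neg at hcon
  -- basic ordering facts
  have h01 : m 0 < m 1 := hmono 0 (by omega)
  have h12 : m 1 < m 2 := hmono 1 (by omega)
  have hm2le : m 2 ≤ 0 := by
    have key : ∀ d, 2 + d ≤ K → m 2 ≤ m (2 + d) := by
      intro d
      induction d with
      | zero => intro _; simp
      | succ n ih =>
        intro h
        have h2 : m 2 ≤ m (2 + n) := ih (by omega)
        have h3 : m (2 + n) < m (2 + n + 1) := hmono (2 + n) (by omega)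
        have : 2 + (n + 1) = 2 + n + 1 := by omega
        rw [this]; linarith
    have := key (K - 2) (by omega)
    rwa [show 2 + (K - 2) = K by omega, hmK] at this
  have hm1neg : m 1 < 0 := lt_of_lt_of_le h12 hm2le
  -- conditional means
  set e1 := condMu f (m 0) (m 1) with he1
  set e2 := condMu f (m 1) (m 2) with he2
  have hb1 : m 0 < e1 ∧ e1 ≤ m 1 :=
    condMu_bounds f hf hfpos (m 0) (m 1) (le_of_eq hm0.symm) h01 hm1neg.le
  have hb2 : m 1 < e2 ∧ e2 ≤ m 2 :=
    condMu_bounds f hf hfpos (m 1) (m 2) (by rw [← hm0]; exact h01.le) h12 hm2le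
  have he1le : e1 ≤ 0 := le_trans hb1.2 hm1neg.le
  have he2le : e2 ≤ 0 := le_trans hb2.2 hm2le
  have he12 : e1 < e2 := lt_of_le_of_lt hb1.2 hb2.1
  set d1 := 1 - C * e1 with hd1def
  set d2 := 1 - C * e2 with hd2def
  have hd1 : 0 < d1 := by rw [hd1def]; nlinarith
  have hd2 : 0 < d2 := by rw [hd2def]; nlinarith
  have hd21 : d2 < d1 := by
    rw [hd1def, hd2def]; nlinarith
  set D := B + A * C with hD
  clear_value e1 e2 d1 d2 D
  have hDne : D ≠ 0 := by
    intro h; apply hB; linarith [h.symm.le, h.le]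
  have hDsq : 0 < D ^ 2 := by positivity
  set p1 := e1 / d1 with hp1
  set p2 := e2 / d2 with hp2
  have hp12 : p1 < p2 := by
    rw [hp1, hp2, div_lt_div_iff₀ hd1 hd2]
    nlinarith
  set M := (p1 + p2) / 2 with hM
  clear_value p1 p2 M
  -- index reductions
  have hk1 : ∀ μ, abeek f A B C m 1 μ = A + μ * D / d1 := by
    intro μ; simp [abeek, ← he1, hd1def, hD]
  have hk2 : ∀ μ, abeek f A B C m 2 μ = A + μ * D / d2 := by
    intro μ; simp [abeek, ← he2, hd2def, hD]
  have hbeta1 : betak f A B C m 1 = A + D * p1 := by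
    simp only [betak, show (1 : ℕ) - 1 = 0 from rfl, ← he1, ← hd1def, hp1, hD]
    field_simp
    rw [hd1def]; ring
  have hbeta2 : betak f A B C m 2 = A + D * p2 := by
    simp only [betak, show (2 : ℕ) - 1 = 1 from rfl, ← he2, ← hd2def, hp2, hD]
    field_simp
    rw [hd2def]; ring
  clear he1 he2 hf hfpos hmono hm0 hmK
  -- first hypothesis instance: μ = m 1 in class 1
  have hmem1 : m 1 ∈ clSet m 1 := by
    simp [clSet, h01.le]
  have H1 := hcon 1 2 le_rfl (by omega) (by omega) hK (m 1) hmem1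
  rw [hk1, hbeta1, hbeta2] at H1
  have hx1 : m 1 / d1 ≤ M := by
    have h1 : A + m 1 * D / d1 - (A + D * p1) = D * (m 1 / d1 - p1) := by
      field_simp; ring
    have h2 : A + m 1 * D / d1 - (A + D * p2) = D * (m 1 / d1 - p2) := by
      field_simp; ring
    rw [h1, h2] at H1
    have H1' : (m 1 / d1 - p1) ^ 2 ≤ (m 1 / d1 - p2) ^ 2 := by
      nlinarith [H1, sq_nonneg D]
    nlinarith [H1', hp12]
  -- choose μ in class 2 close to m 1
  have hm1d2 : m 1 / d2 < m 1 / d1 := by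
    rw [div_lt_div_iff₀ hd2 hd1]; nlinarith
  have hm1M : m 1 < M * d2 := by
    have : m 1 / d2 < M := lt_of_lt_of_le hm1d2 hx1
    calc m 1 = m 1 / d2 * d2 := by field_simp
      _ < M * d2 := by exact mul_lt_mul_of_pos_right this hd2
  set μ := min (m 2) ((m 1 + M * d2) / 2) with hμ
  have hμgt : m 1 < μ := by
    apply lt_min h12; linarith
  have hμle : μ ≤ m 2 := min_le_left _ _
  have hμM : μ / d2 < M := by
    have h1 : μ ≤ (m 1 + M * d2) / 2 := min_le_right _ _
    have h2 : μ < M * d2 := by linarith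
    rwa [div_lt_iff₀ hd2]
  have hmem2 : μ ∈ clSet m 2 := by
    simp only [clSet, show (2 : ℕ) - 1 = 1 from rfl, if_neg (by norm_num : (2 : ℕ) ≠ 1)]
    exact ⟨hμgt, hμle⟩
  have H2 := hcon 2 1 (by omega) hK le_rfl (by omega) μ hmem2
  rw [hk2, hbeta1, hbeta2] at H2
  have h1 : A + μ * D / d2 - (A + D * p1) = D * (μ / d2 - p1) := by
    field_simp; ring
  have h2 : A + μ * D / d2 - (A + D * p2) = D * (μ / d2 - p2) := by
    field_simp; ring
  rw [h1, h2] at H2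
  have H2' : (μ / d2 - p2) ^ 2 ≤ (μ / d2 - p1) ^ 2 := by
    nlinarith [H2, sq_nonneg D]
  nlinarith [H2', hp12, hμM]
end
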